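/- arXiv:math/0607795 — 7 statements merged into one kernel-verified Lean document; each statement's English description precedes it below -/
import Mathlib

section
/- Let 1 ≤ q ≤ p < ∞ and let (x_i)_{i≥1}, (y_j)_{j≥1} be nonincreasing sequences of nonnegative reals. Then the ℓ-type Lorentz quantity satisfies submultiplicativity over tensor products: if (z_k)_{k≥1} denotes the nonincreasing rearrangement of the doubly-indexed family (x_i · y_j)_{i,j≥1}, then (∑_{k=1}^∞ z_k^q / k^{1 - q/p})^{1/q} ≤ (∑_{i=1}^∞ x_i^q / i^{1 - q/p})^{1/q} · (∑_{j=1}^∞ y_j^q / j^{1 - q/p})^{1/q}. -/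
/-!
Let `e` list the products `x_i y_j` in nonincreasing order and put `α = 1 - q/p`. Whenever `z`
strictly drops after position `n`, the pairs `e 0, …, e n` form a lower set of `ℕ × ℕ`; such a set
contains the box `[0, i] × [0, j]` below each of its members, so peeling off maximal elements gives
`∑_{k ≤ n} (k+1)^{-α} ≤ ∑_{k ≤ n} ((i_k+1)(j_k+1))^{-α}`, where `e k = (i_k, j_k)`. Abel summation
against the nonincreasing `z_k^q` upgrades these partial-sum inequalities to
`∑ z_k^q (k+1)^{-α} ≤ ∑ z_k^q ((i_k+1)(j_k+1))^{-α}`, and the right side is the product of the sums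
for `x` and `y`. If `z` stops dropping at a positive value, that right side is infinite since
`∑ (k+1)^{-α}` diverges for `α ≤ 1`.
-/

open Finset
open scoped ENNReal

theorem IsLowerSet.sum_range_le_sum_card_Iic {α M : Type*} [PartialOrder α]
    [LocallyFiniteOrderBot α] [AddCommMonoid M] [PartialOrder M] [IsOrderedAddMonoid M]
    {f : ℕ → M} (hf : Antitone f) {S : Finset α} (hS : IsLowerSet (S : Set α)) :
    ∑ k ∈ range #S, f (k + 1) ≤ ∑ p ∈ S, f #(Iic p) := by
  classical
  induction hcard : #S generalizing S with
  | zero => simp [card_eq_zero.1 hcard]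
  | succ n ih =>
    obtain ⟨P, hP⟩ := S.exists_maximal (card_pos.1 (by omega))
    have hS' : IsLowerSet ((S.erase P : Finset α) : Set α) := by
      rw [coe_erase]
      exact hS.erase fun b hb hPb => hP.eq_of_ge hb hPb
    have hIic : #(Iic P) ≤ n + 1 := hcard ▸ card_le_card fun r hr => by
      simpa using hS.Iic_subset hP.prop (mem_Iic.1 hr)
    calc ∑ k ∈ range (n + 1), f (k + 1)
        = ∑ k ∈ range n, f (k + 1) + f (n + 1) := sum_range_succ _ _
      _ ≤ ∑ p ∈ S.erase P, f #(Iic p) + f #(Iic P) :=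
          add_le_add (ih hS' (by rw [card_erase_of_mem hP.prop, hcard]; rfl)) (hf hIic)
      _ = ∑ p ∈ S, f #(Iic p) := sum_erase_add _ _ hP.prop

theorem ENNReal.sum_range_by_parts {Z : ℕ → ℝ≥0∞} (hZ : Antitone Z)
    (a : ℕ → ℝ≥0∞) (N : ℕ) :
    ∑ k ∈ range N, Z k * a k =
      ∑ n ∈ range N, (Z n - Z (n + 1)) * ∑ k ∈ range (n + 1), a k
        + Z N * ∑ k ∈ range N, a k := by
  induction N with
  | zero => simp
  | succ N ih =>
    have hsplit : Z N = (Z N - Z (N + 1)) + Z (N + 1) :=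
      (tsub_add_cancel_of_le (hZ N.le_succ)).symm
    rw [sum_range_succ, ih, sum_range_succ _ N, sum_range_succ a N, add_assoc, ← mul_add,
      add_assoc, ← add_mul, ← hsplit]

theorem ENNReal.sum_range_mul_le_of_drops {Z : ℕ → ℝ≥0∞} (hZ : Antitone Z) {a b : ℕ → ℝ≥0∞}
    {N : ℕ}
    (hdrop : ∀ n < N, Z (n + 1) < Z n → ∑ k ∈ range (n + 1), a k ≤ ∑ k ∈ range (n + 1), b k)
    (hN : Z N * ∑ k ∈ range N, a k ≤ Z N * ∑ k ∈ range N, b k) :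
    ∑ k ∈ range N, Z k * a k ≤ ∑ k ∈ range N, Z k * b k := by
  rw [sum_range_by_parts hZ, sum_range_by_parts hZ]
  refine add_le_add (sum_le_sum fun n hn => ?_) hN
  rcases lt_or_ge (Z (n + 1)) (Z n) with h | h
  · exact mul_le_mul_right (hdrop n (mem_range.1 hn) h) _
  · simp [tsub_eq_zero_of_le h]

theorem ENNReal.tsum_mul_le_of_drops {Z : ℕ → ℝ≥0∞} (hZ : Antitone Z) {a b : ℕ → ℝ≥0∞}
    (hdrop : ∀ n, Z (n + 1) < Z n → ∑ k ∈ range (n + 1), a k ≤ ∑ k ∈ range (n + 1), b k)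
    (hb : ∑' k, b k = ∞) :
    ∑' k, Z k * a k ≤ ∑' k, Z k * b k := by
  rw [ENNReal.tsum_eq_iSup_nat]
  refine iSup_le fun M => ?_
  by_cases hlater : ∃ n, M ≤ n ∧ Z (n + 1) < Z n
  · obtain ⟨n, hMn, hn⟩ := hlater
    calc ∑ k ∈ range M, Z k * a k ≤ ∑ k ∈ range (n + 1), Z k * a k :=
          sum_le_sum_of_subset (range_subset_range.2 (by omega))
      _ ≤ ∑ k ∈ range (n + 1), Z k * b k :=
          sum_range_mul_le_of_drops hZ (fun m _ => hdrop m) (mul_le_mul_right (hdrop n hn) _)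
      _ ≤ ∑' k, Z k * b k := ENNReal.sum_le_tsum _
  push Not at hlater
  by_cases hM : Z M = 0
  · calc ∑ k ∈ range M, Z k * a k ≤ ∑ k ∈ range M, Z k * b k :=
          sum_range_mul_le_of_drops hZ (fun m _ => hdrop m) (by simp [hM])
      _ ≤ ∑' k, Z k * b k := ENNReal.sum_le_tsum _
  -- `Z` is constant from `M` on, with a positive value, so the right-hand side diverges.
  have hZM : ∀ k, Z M ≤ Z k := fun k => by
    rcases le_total k M with hk | hk
    · exact hZ hk
    · induction k, hk using Nat.le_induction with
      | base => exact le_rfl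
      | succ k hk ih => exact ih.trans (hlater k hk)
  calc _ ≤ ∞ := le_top
    _ = Z M * ∑' k, b k := by rw [hb, ENNReal.mul_top hM]
    _ ≤ ∑' k, Z k * b k := by
        rw [← ENNReal.tsum_mul_left]; exact ENNReal.tsum_le_tsum fun k => mul_le_mul_left (hZM k) _

theorem isLowerSet_map_range_of_lt {β γ : Type*} [Preorder β] [LinearOrder γ] {F : β → γ}
    (hF : Antitone F) (e : ℕ ≃ β) (hFe : Antitone (F ∘ e)) {n : ℕ}
    (hn : F (e (n + 1)) < F (e n)) :
    IsLowerSet (((range (n + 1)).map e.toEmbedding : Finset β) : Set β) := by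
  intro a b hba ha
  rw [mem_coe, mem_map_equiv, mem_range] at ha ⊢
  by_contra! hle
  have hab : F (e (e.symm a)) ≤ F (e (e.symm b)) := by simpa using hF hba
  exact (hFe hle).not_gt (hn.trans_le ((hFe (Nat.lt_succ_iff.1 ha)).trans hab))

theorem ENNReal.tsum_mul_weight_le_of_eq_mul {X Y Z : ℕ → ℝ≥0∞} (hX : Antitone X)
    (hY : Antitone Y) (hZ : Antitone Z) (e : ℕ ≃ ℕ × ℕ) (he : ∀ k, Z k = X (e k).1 * Y (e k).2)
    {w : ℕ → ℝ≥0∞} (hw : Antitone w) (hw_mul : ∀ m n, w (m * n) ≤ w m * w n)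
    (hw_sum : ∑' k, w (k + 1) = ∞) :
    ∑' k, Z k * w (k + 1) ≤ (∑' i, X i * w (i + 1)) * ∑' j, Y j * w (j + 1) := by
  set F : ℕ × ℕ → ℝ≥0∞ := fun p => X p.1 * Y p.2
  have hF : Antitone F := fun p r h => mul_le_mul' (hX h.1) (hY h.2)
  have hZF : Z = F ∘ e := funext he
  have hdrop : ∀ n, Z (n + 1) < Z n →
      ∑ k ∈ range (n + 1), w (k + 1) ≤ ∑ k ∈ range (n + 1), w #(Iic (e k)) := by
    intro n hn
    subst hZF
    simpa using (isLowerSet_map_range_of_lt hF e hZ hn).sum_range_le_sum_card_Iic hw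
  have hcard : ∀ p : ℕ × ℕ, #(Iic p) = (p.1 + 1) * (p.2 + 1) := fun p => by
    rw [card_Iic_prod, Nat.card_Iic, Nat.card_Iic]
  have hdiv : ∑' k, w #(Iic (e k)) = ∞ := by
    refine top_le_iff.1 (hw_sum ▸ ?_)
    rw [e.tsum_eq fun p => w #(Iic p)]
    simpa [hcard] using ENNReal.tsum_comp_le_tsum_of_injective
      (fun i j h => (Prod.mk.inj h).1 : Function.Injective fun i : ℕ => (i, 0))
      fun p => w #(Iic p)
  calc ∑' k, Z k * w (k + 1) ≤ ∑' k, Z k * w #(Iic (e k)) := tsum_mul_le_of_drops hZ hdrop hdiv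
    _ = ∑' p, F p * w #(Iic p) := by
        simp only [he]; exact e.tsum_eq fun p => F p * w #(Iic p)
    _ ≤ ∑' p : ℕ × ℕ, X p.1 * w (p.1 + 1) * (Y p.2 * w (p.2 + 1)) :=
        ENNReal.tsum_le_tsum fun p => by
          rw [hcard, mul_mul_mul_comm]; exact mul_le_mul_right (hw_mul _ _) _
    _ = _ := by
        simp only [ENNReal.tsum_prod', ENNReal.tsum_mul_left, ENNReal.tsum_mul_right]

theorem ENNReal.antitone_inv_natCast_rpow {α : ℝ} (hα : 0 ≤ α) :
    Antitone fun m : ℕ => ((m : ℝ≥0∞) ^ α)⁻¹ := fun _ _ h =>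
  ENNReal.inv_le_inv.2 (ENNReal.rpow_le_rpow (Nat.cast_le.2 h) hα)

theorem ENNReal.inv_natCast_mul_rpow {α : ℝ} (hα : 0 ≤ α) (m n : ℕ) :
    (((m * n : ℕ) : ℝ≥0∞) ^ α)⁻¹ = ((m : ℝ≥0∞) ^ α)⁻¹ * ((n : ℝ≥0∞) ^ α)⁻¹ := by
  have hfin : ∀ k : ℕ, (k : ℝ≥0∞) ^ α ≠ ∞ := fun k =>
    ENNReal.rpow_ne_top_of_nonneg hα (ENNReal.natCast_ne_top k)
  rw [Nat.cast_mul, ENNReal.mul_rpow_of_nonneg _ _ hα,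
    ENNReal.mul_inv (Or.inr (hfin n)) (Or.inl (hfin m))]

theorem ENNReal.tsum_inv_natCast_succ_rpow_eq_top {α : ℝ} (hα : α ≤ 1) :
    ∑' k : ℕ, (((k + 1 : ℕ) : ℝ≥0∞) ^ α)⁻¹ = ∞ := by
  by_contra h
  refine (Real.summable_one_div_nat_add_rpow 1 α).not.2 hα.not_gt ?_
  convert ENNReal.summable_toReal h using 2 with k
  rw [ENNReal.toReal_inv, ← ENNReal.toReal_rpow]
  simp [abs_of_nonneg (by positivity : (0 : ℝ) ≤ k + 1), ENNReal.toReal_add]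

-- 0-indexed: `x k` stands for `x_{k+1}`.
theorem stmt_2_general (p q : ℝ) (hq : 1 ≤ q) (hpq : q ≤ p)
    (x y z : ℕ → ℝ)
    (hx : Antitone x) (hx0 : ∀ i, 0 ≤ x i)
    (hy : Antitone y)
    (hz : Antitone z)
    (e : ℕ ≃ ℕ × ℕ) (he : ∀ k, z k = x (e k).1 * y (e k).2) :
    (∑' k : ℕ, ENNReal.ofReal (z k) ^ q / (k + 1 : ENNReal) ^ (1 - q / p)) ^ (1 / q)
      ≤ (∑' i : ℕ, ENNReal.ofReal (x i) ^ q / (i + 1 : ENNReal) ^ (1 - q / p)) ^ (1 / q)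
        * (∑' j : ℕ, ENNReal.ofReal (y j) ^ q / (j + 1 : ENNReal) ^ (1 - q / p)) ^ (1 / q) := by
  have hq0 : 0 < q := zero_lt_one.trans_le hq
  have hp0 : 0 < p := hq0.trans_le hpq
  have hα0 : 0 ≤ 1 - q / p := sub_nonneg.2 ((div_le_one hp0).2 hpq)
  have hα1 : 1 - q / p ≤ 1 := sub_le_self _ (div_nonneg hq0.le hp0.le)
  have hpow : ∀ {u : ℕ → ℝ}, Antitone u → Antitone fun i => ENNReal.ofReal (u i) ^ q :=
    fun hu _ _ h => ENNReal.rpow_le_rpow (ENNReal.ofReal_le_ofReal (hu h)) hq0.le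
  have hsummand : ∀ (u : ℕ → ℝ) (k : ℕ), ENNReal.ofReal (u k) ^ q / (k + 1 : ℝ≥0∞) ^ (1 - q / p)
      = ENNReal.ofReal (u k) ^ q * (((k + 1 : ℕ) : ℝ≥0∞) ^ (1 - q / p))⁻¹ := fun u k => by
    rw [div_eq_mul_inv, Nat.cast_succ]
  rw [← ENNReal.mul_rpow_of_nonneg _ _ (by positivity)]
  refine ENNReal.rpow_le_rpow ?_ (by positivity)
  simp only [hsummand]
  refine ENNReal.tsum_mul_weight_le_of_eq_mul (hpow hx) (hpow hy) (hpow hz) e (fun k => ?_)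
    (ENNReal.antitone_inv_natCast_rpow hα0) (fun m n => (ENNReal.inv_natCast_mul_rpow hα0 m n).le)
    (ENNReal.tsum_inv_natCast_succ_rpow_eq_top hα1)
  rw [he, ENNReal.ofReal_mul (hx0 _), ENNReal.mul_rpow_of_nonneg _ _ hq0.le]

/-- Submultiplicativity of the Lorentz S_{p,q} quantity over tensor products
of nonincreasing nonnegative sequences (0-indexed: x k stands for x_{k+1}). -/
theorem stmt_2 (p q : ℝ) (hq : 1 ≤ q) (hpq : q ≤ p)
    (x y z : ℕ → ℝ)
    (hx : Antitone x) (hx0 : ∀ i, 0 ≤ x i)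
    (hy : Antitone y) (hy0 : ∀ j, 0 ≤ y j)
    (hz : Antitone z) (hz0 : ∀ k, 0 ≤ z k)
    (e : ℕ ≃ ℕ × ℕ) (he : ∀ k, z k = x (e k).1 * y (e k).2) :
    (∑' k : ℕ, ENNReal.ofReal (z k) ^ q / (k + 1 : ENNReal) ^ (1 - q / p)) ^ (1 / q)
      ≤ (∑' i : ℕ, ENNReal.ofReal (x i) ^ q / (i + 1 : ENNReal) ^ (1 - q / p)) ^ (1 / q)
        * (∑' j : ℕ, ENNReal.ofReal (y j) ^ q / (j + 1 : ENNReal) ^ (1 - q / p)) ^ (1 / q) :=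
  stmt_2_general p q hq hpq x y z hx hx0 hy hz e he
end

section
/- Let π_j = j^{1/p − 1} for some 1 ≤ p < ∞, and S_n = ∑_{j=1}^n j^{1/p−1}. Then S_{mn} ≤ S_m · S_n for all m, n ∈ ℕ. -/
/-! Induction on `m`, with `α = 1/p - 1 ≤ 0`: the block `j = mn + r`, `1 ≤ r ≤ n`, satisfies
`j ≥ (m+1) r`, hence `j^α ≤ (m+1)^α r^α`, so `S_{(m+1)n} ≤ S_m S_n + (m+1)^α S_n = S_{m+1} S_n`. -/

open Finset

theorem sum_Icc_one_mul_le_mul {R : Type*} [CommSemiring R] [PartialOrder R] [IsOrderedRing R]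
    {f : ℕ → R} (hf : ∀ a b j, 0 < a → 0 < b → a * b ≤ j → f j ≤ f a * f b) (m n : ℕ) :
    ∑ j ∈ Icc 1 (m * n), f j ≤ (∑ j ∈ Icc 1 m, f j) * ∑ j ∈ Icc 1 n, f j := by
  simp only [show ∀ k, Icc 1 k = Ioc 0 k from Icc_add_one_left_eq_Ioc 0]
  induction m with
  | zero => simp
  | succ m ih =>
    have hblock : ∑ j ∈ Ioc (m * n) (m * n + n), f j ≤ f (m + 1) * ∑ r ∈ Ioc 0 n, f r := by
      rw [show Ioc (m * n) (m * n + n) = (Ioc 0 n).map (addLeftEmbedding (m * n)) by simp,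
        sum_map, mul_sum]
      refine sum_le_sum fun r hr => hf _ _ _ m.succ_pos (mem_Ioc.1 hr).1 ?_
      have := (mem_Ioc.1 hr).2
      simp only [addLeftEmbedding_apply]
      nlinarith
    calc ∑ j ∈ Ioc 0 ((m + 1) * n), f j
        = ∑ j ∈ Ioc 0 (m * n), f j + ∑ j ∈ Ioc (m * n) (m * n + n), f j := by
          rw [sum_Ioc_consecutive _ (Nat.zero_le _) (Nat.le_add_right _ _), add_one_mul]
      _ ≤ (∑ j ∈ Ioc 0 m, f j) * ∑ j ∈ Ioc 0 n, f j + f (m + 1) * ∑ r ∈ Ioc 0 n, f r :=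
          add_le_add ih hblock
      _ = (∑ j ∈ Ioc 0 (m + 1), f j) * ∑ j ∈ Ioc 0 n, f j := by
          rw [sum_Ioc_succ_top (Nat.zero_le m), add_mul]

theorem Real.natCast_rpow_le_mul_of_nonpos {α : ℝ} (hα : α ≤ 0) {a b j : ℕ} (ha : 0 < a)
    (hb : 0 < b) (hj : a * b ≤ j) : (j : ℝ) ^ α ≤ (a : ℝ) ^ α * (b : ℝ) ^ α := by
  rw [← Real.mul_rpow a.cast_nonneg b.cast_nonneg, ← Nat.cast_mul]
  exact Real.rpow_le_rpow_of_nonpos (by positivity) (by exact_mod_cast hj) hα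

/-- For π_j = j^{1/p−1} (1 ≤ p < ∞) and S_n = ∑_{j=1}^n j^{1/p−1},
the partial sums are submultiplicative: S_{mn} ≤ S_m·S_n. -/
theorem stmt_4 (p : ℝ) (hp : 1 ≤ p)
    (S : ℕ → ℝ) (hS : ∀ n, S n = ∑ j ∈ Finset.Icc 1 n, (j : ℝ) ^ (1 / p - 1)) :
    ∀ m n : ℕ, S (m * n) ≤ S m * S n := by
  intro m n
  have hα : 1 / p - 1 ≤ 0 := by
    rw [sub_nonpos, div_le_one (by linarith)]
    exact hp
  simpa only [hS] using
    sum_Icc_one_mul_le_mul (fun a b j => Real.natCast_rpow_le_mul_of_nonpos hα) m n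
end

section
/- Let π be a binormalizing sequence with partial sums S_n, and suppose there exists c > 0 with S_{mn} ≤ c S_m S_n for all m, n. Then for all nonincreasing nonnegative sequences (a_i) and (b_j) with finite Φ_π-norm, Φ_π(nonincreasing rearrangement of (a_i b_j)_{i,j}) ≤ c · Φ_π(a) · Φ_π(b). -/
/-!
Write `a i = ∑_{m ≥ i} (a m - a (m + 1))`, which needs `a → 0`: this is where the divergence of `∑ π`
enters. Then `a i * b j` is a nonnegative combination of indicators of the rectangles
`[0, m] × [0, n]`. A rectangle contains `(m + 1) * (n + 1)` products, and since `π` is nonincreasing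
their total `π`-weight in any enumeration is at most `S ((m + 1) * (n + 1)) ≤ c * S (m + 1) * S (n + 1)`.
Summing over the rectangles and undoing the telescoping by Abel summation gives `c * Φ(a) * Φ(b)`.
All interchanges of summation are done in `ℝ≥0∞`, where they are unconditional.
-/

open Filter Finset Topology
open scoped ENNReal

theorem Antitone.hasSum_sub_succ {f : ℕ → ℝ} (hf : Antitone f) (hf0 : Tendsto f atTop (𝓝 0)) :
    HasSum (fun n => f n - f (n + 1)) (f 0) := by
  rw [hasSum_iff_tendsto_nat_of_nonneg fun n => sub_nonneg.2 (hf n.le_succ)]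
  simp_rw [Finset.sum_range_sub']
  simpa using tendsto_const_nhds.sub hf0

theorem ENNReal.ofReal_eq_tsum_ite_ofReal_sub {f : ℕ → ℝ} (hf : Antitone f)
    (hf0 : Tendsto f atTop (𝓝 0)) (i : ℕ) :
    ENNReal.ofReal (f i) = ∑' m, if i ≤ m then ENNReal.ofReal (f m - f (m + 1)) else 0 := by
  have hshift : HasSum (fun n => f (n + i) - f (n + i + 1)) (f i) := by
    have := (hf.comp_monotone fun _ _ h => Nat.add_le_add_right h i).hasSum_sub_succ
      (hf0.comp (tendsto_add_atTop_nat i))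
    simpa [Function.comp_def, add_right_comm] using this
  have hsum : HasSum (fun m => if i ≤ m then f m - f (m + 1) else 0) (f i) := by
    rw [← hasSum_nat_add_iff' i]
    have hzero : ∑ m ∈ range i, (if i ≤ m then f m - f (m + 1) else 0) = 0 :=
      Finset.sum_eq_zero fun m hm => if_neg (not_le.2 (Finset.mem_range.1 hm))
    simpa [hzero] using hshift
  have hnonneg : ∀ m, 0 ≤ if i ≤ m then f m - f (m + 1) else 0 := fun m => by
    split_ifs
    exacts [sub_nonneg.2 (hf m.le_succ), le_rfl]
  rw [← hsum.tsum_eq, ENNReal.ofReal_tsum_of_nonneg hnonneg hsum.summable]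
  congr! 2 with m
  split_ifs <;> simp

theorem tsum_ite_le_eq_sum_range {M : Type*} [AddCommMonoid M] [TopologicalSpace M] [T2Space M]
    (g : ℕ → M) (m : ℕ) : ∑' i, (if i ≤ m then g i else 0) = ∑ i ∈ range (m + 1), g i := by
  rw [tsum_eq_sum (s := range (m + 1)) fun i hi => if_neg (by simpa [Nat.lt_succ_iff] using hi)]
  exact Finset.sum_congr rfl fun i hi => if_pos (Nat.lt_succ_iff.1 (Finset.mem_range.1 hi))

theorem Finset.sum_le_sum_range_of_antitone {M : Type*} [AddCommMonoid M] [PartialOrder M]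
    [IsOrderedAddMonoid M] [CanonicallyOrderedAdd M] {w : ℕ → M} (hw : Antitone w)
    {s : Finset ℕ} {N : ℕ} (hs : #s ≤ N) : ∑ x ∈ s, w x ≤ ∑ i ∈ range N, w i := by
  refine le_trans ?_ (Finset.sum_le_sum_of_subset (Finset.range_subset_range.2 hs))
  clear hs
  induction s using Finset.induction_on_max with
  | empty => simp
  | insert x t hlt ih =>
    have hxt : x ∉ t := fun h => lt_irrefl x (hlt x h)
    have hcard : #t ≤ x := by
      simpa using Finset.card_le_card (fun y hy => Finset.mem_range.2 (hlt y hy) : t ⊆ range x)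
    rw [Finset.sum_insert hxt, Finset.card_insert_of_notMem hxt, Finset.sum_range_succ, add_comm]
    exact add_le_add ih (hw hcard)

theorem ENNReal.tsum_mul_ofReal_eq_tsum_ofReal_sub_mul {f : ℕ → ℝ} (hf : Antitone f)
    (hf0 : Tendsto f atTop (𝓝 0)) (w : ℕ → ℝ≥0∞) :
    ∑' i, w i * ENNReal.ofReal (f i)
      = ∑' m, ENNReal.ofReal (f m - f (m + 1)) * ∑ i ∈ range (m + 1), w i := by
  calc ∑' i, w i * ENNReal.ofReal (f i)
      = ∑' i, ∑' m, if i ≤ m then ENNReal.ofReal (f m - f (m + 1)) * w i else 0 := by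
        refine tsum_congr fun i => ?_
        rw [ENNReal.ofReal_eq_tsum_ite_ofReal_sub hf hf0 i, ← ENNReal.tsum_mul_left]
        exact tsum_congr fun m => by rw [mul_ite, mul_zero, mul_comm]
    _ = ∑' m, ∑' i, if i ≤ m then ENNReal.ofReal (f m - f (m + 1)) * w i else 0 :=
        ENNReal.tsum_comm
    _ = ∑' m, ENNReal.ofReal (f m - f (m + 1)) * ∑ i ∈ range (m + 1), w i := by
        refine tsum_congr fun m => ?_
        rw [← tsum_ite_le_eq_sum_range, ← ENNReal.tsum_mul_left]
        exact tsum_congr fun i => by rw [mul_ite, mul_zero]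

theorem tsum_ite_le_le_sum_range_mul {e : ℕ → ℕ × ℕ} (he : Function.Injective e)
    {w : ℕ → ℝ≥0∞} (hw : Antitone w) (m n : ℕ) :
    ∑' k, (if (e k).1 ≤ m ∧ (e k).2 ≤ n then w k else 0)
      ≤ ∑ i ∈ range ((m + 1) * (n + 1)), w i := by
  set s := (range (m + 1) ×ˢ range (n + 1)).preimage e he.injOn
  have hmem : ∀ k, k ∈ s ↔ (e k).1 ≤ m ∧ (e k).2 ≤ n := fun k => by simp [s]
  have hcard : #s ≤ (m + 1) * (n + 1) := by
    simpa using Finset.card_le_card_of_injOn (t := range (m + 1) ×ˢ range (n + 1)) e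
      (fun k hk => by simpa [s] using hk) he.injOn
  rw [tsum_eq_sum (s := s) fun k hk => if_neg (mt (hmem k).2 hk),
    Finset.sum_congr rfl fun k hk => if_pos ((hmem k).1 hk)]
  exact Finset.sum_le_sum_range_of_antitone hw hcard

theorem ENNReal.ofReal_mul_ofReal_eq_tsum {f g : ℕ → ℝ} (hf : Antitone f)
    (hf0 : Tendsto f atTop (𝓝 0)) (hg : Antitone g) (hg0 : Tendsto g atTop (𝓝 0)) (i j : ℕ) :
    ENNReal.ofReal (f i) * ENNReal.ofReal (g j) = ∑' m, ∑' n,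
      if i ≤ m ∧ j ≤ n then ENNReal.ofReal (f m - f (m + 1)) * ENNReal.ofReal (g n - g (n + 1))
      else 0 := by
  rw [ENNReal.ofReal_eq_tsum_ite_ofReal_sub hf hf0, ENNReal.ofReal_eq_tsum_ite_ofReal_sub hg hg0,
    ← ENNReal.tsum_mul_right]
  refine tsum_congr fun m => ?_
  rw [← ENNReal.tsum_mul_left]
  exact tsum_congr fun n => ite_zero_mul_ite_zero ..

theorem ENNReal.tsum_mul_ofReal_mul_le {w : ℕ → ℝ≥0∞} (hw : Antitone w) {C : ℝ≥0∞}
    (hC : ∀ m n, ∑ i ∈ range (m * n), w i ≤ C * (∑ i ∈ range m, w i) * ∑ i ∈ range n, w i)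
    {f g : ℕ → ℝ} (hf : Antitone f) (hf0 : Tendsto f atTop (𝓝 0)) (hg : Antitone g)
    (hg0 : Tendsto g atTop (𝓝 0)) {e : ℕ → ℕ × ℕ} (he : Function.Injective e) :
    ∑' k, w k * ENNReal.ofReal (f (e k).1 * g (e k).2)
      ≤ C * (∑' i, w i * ENNReal.ofReal (f i)) * ∑' j, w j * ENNReal.ofReal (g j) := by
  set Δf := fun m => ENNReal.ofReal (f m - f (m + 1))
  set Δg := fun n => ENNReal.ofReal (g n - g (n + 1))
  set W := fun m => ∑ i ∈ range m, w i
  calc ∑' k, w k * ENNReal.ofReal (f (e k).1 * g (e k).2)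
      = ∑' k, ∑' m, ∑' n, if (e k).1 ≤ m ∧ (e k).2 ≤ n then Δf m * Δg n * w k else 0 := by
        refine tsum_congr fun k => ?_
        rw [ENNReal.ofReal_mul (hf.le_of_tendsto hf0 _),
          ENNReal.ofReal_mul_ofReal_eq_tsum hf hf0 hg hg0, mul_comm, ← ENNReal.tsum_mul_right]
        refine tsum_congr fun m => ?_
        rw [← ENNReal.tsum_mul_right]
        exact tsum_congr fun n => by rw [ite_mul, zero_mul]
    _ = ∑' m, ∑' n, Δf m * Δg n * ∑' k, if (e k).1 ≤ m ∧ (e k).2 ≤ n then w k else 0 := by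
        rw [ENNReal.tsum_comm]
        refine tsum_congr fun m => ?_
        rw [ENNReal.tsum_comm]
        refine tsum_congr fun n => ?_
        rw [← ENNReal.tsum_mul_left]
        exact tsum_congr fun k => by rw [mul_ite, mul_zero]
    _ ≤ ∑' m, ∑' n, Δf m * Δg n * (C * W (m + 1) * W (n + 1)) := by
        gcongr with m n
        exact (tsum_ite_le_le_sum_range_mul he hw m n).trans (hC _ _)
    _ = C * (∑' m, Δf m * W (m + 1)) * ∑' n, Δg n * W (n + 1) := by
        symm
        rw [mul_assoc, ← ENNReal.tsum_mul_right, ← ENNReal.tsum_mul_left]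
        refine tsum_congr fun m => ?_
        rw [← ENNReal.tsum_mul_left, ← ENNReal.tsum_mul_left]
        exact tsum_congr fun n => by ring
    _ = C * (∑' i, w i * ENNReal.ofReal (f i)) * ∑' j, w j * ENNReal.ofReal (g j) := by
        rw [ENNReal.tsum_mul_ofReal_eq_tsum_ofReal_sub_mul hf hf0,
          ENNReal.tsum_mul_ofReal_eq_tsum_ofReal_sub_mul hg hg0]

theorem Antitone.tendsto_zero_of_summable_mul {w f : ℕ → ℝ} (hw0 : ∀ i, 0 ≤ w i)
    (hw : ¬ Summable w) (hf : Antitone f) (hf0 : ∀ i, 0 ≤ f i)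
    (hwf : Summable fun i => w i * f i) : Tendsto f atTop (𝓝 0) := by
  have hbdd : BddBelow (Set.range f) := ⟨0, by rintro _ ⟨i, rfl⟩; exact hf0 i⟩
  have hinf : ⨅ i, f i = 0 := by
    by_contra hne
    refine hw ((summable_mul_right_iff hne).1 (hwf.of_nonneg_of_le
      (fun i => mul_nonneg (hw0 i) (le_ciInf hf0)) fun i => ?_))
    exact mul_le_mul_of_nonneg_left (ciInf_le hbdd i) (hw0 i)
  simpa [hinf] using tendsto_atTop_ciInf hf hbdd

theorem ENNReal.tsum_ofReal_mul_ofReal_ne_top {v f : ℕ → ℝ} (hv : ∀ i, 0 ≤ v i)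
    (hf : ∀ i, 0 ≤ f i) (hvf : Summable fun i => v i * f i) :
    ∑' i, ENNReal.ofReal (v i) * ENNReal.ofReal (f i) ≠ ∞ := by
  simp_rw [← ENNReal.ofReal_mul (hv _)]
  rw [← ENNReal.ofReal_tsum_of_nonneg (fun i => mul_nonneg (hv i) (hf i)) hvf]
  exact ENNReal.ofReal_ne_top

theorem ENNReal.toReal_tsum_ofReal_mul {v f : ℕ → ℝ} (hv : ∀ i, 0 ≤ v i) (hf : ∀ i, 0 ≤ f i) :
    (∑' i, ENNReal.ofReal (v i) * ENNReal.ofReal (f i)).toReal = ∑' i, v i * f i := by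
  rw [ENNReal.tsum_toReal_eq fun i => ENNReal.mul_ne_top ENNReal.ofReal_ne_top ENNReal.ofReal_ne_top]
  simp [ENNReal.toReal_ofReal, hv, hf]

theorem stmt_8_general (π : ℕ → ℝ) (hπpos : ∀ j, 1 ≤ j → 0 < π j)
    (hπanti : ∀ i j : ℕ, 1 ≤ i → i ≤ j → π j ≤ π i) (hπdiv : ¬ Summable π)
    (S : ℕ → ℝ) (hS : ∀ m, S m = ∑ j ∈ Finset.Icc 1 m, π j)
    (c : ℝ) (hc : 0 < c) (hsub : ∀ m n : ℕ, S (m * n) ≤ c * S m * S n)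
    (a b z : ℕ → ℝ)
    (ha : Antitone a) (ha0 : ∀ i, 0 ≤ a i) (haΦ : Summable (fun i => π (i + 1) * a i))
    (hb : Antitone b) (hb0 : ∀ j, 0 ≤ b j) (hbΦ : Summable (fun j => π (j + 1) * b j))
    (e : ℕ ≃ ℕ × ℕ) (he : ∀ k, z k = a (e k).1 * b (e k).2) :
    (∑' k : ℕ, π (k + 1) * z k)
      ≤ c * (∑' i : ℕ, π (i + 1) * a i) * (∑' j : ℕ, π (j + 1) * b j) := by
  have hπ0 : ∀ k, 0 ≤ π (k + 1) := fun k => (hπpos _ k.succ_pos).le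
  have hπ' : ¬ Summable fun k => π (k + 1) := by rwa [summable_nat_add_iff 1]
  set w : ℕ → ℝ≥0∞ := fun k => ENNReal.ofReal (π (k + 1))
  have hw : Antitone w := fun k l hkl =>
    ENNReal.ofReal_le_ofReal (hπanti _ _ k.succ_pos (by omega))
  have hW : ∀ m, ∑ i ∈ range m, w i = ENNReal.ofReal (S m) := fun m => by
    rw [← ENNReal.ofReal_sum_of_nonneg fun k _ => hπ0 k, hS, ← Finset.Ico_add_one_right_eq_Icc,
      Finset.sum_Ico_eq_sum_range]
    simp [add_comm]
  have hC : ∀ m n, ∑ i ∈ range (m * n), w i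
      ≤ ENNReal.ofReal c * (∑ i ∈ range m, w i) * ∑ i ∈ range n, w i := fun m n => by
    have hS0 : 0 ≤ S m := hS m ▸ Finset.sum_nonneg fun j hj => (hπpos j (mem_Icc.1 hj).1).le
    rw [hW, hW, hW, ← ENNReal.ofReal_mul hc.le, ← ENNReal.ofReal_mul (mul_nonneg hc.le hS0)]
    exact ENNReal.ofReal_le_ofReal (hsub m n)
  have key := ENNReal.tsum_mul_ofReal_mul_le hw hC ha
    (ha.tendsto_zero_of_summable_mul hπ0 hπ' ha0 haΦ) hb
    (hb.tendsto_zero_of_summable_mul hπ0 hπ' hb0 hbΦ) e.injective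
  simp_rw [← he] at key
  have hz0 : ∀ k, 0 ≤ z k := fun k => he k ▸ mul_nonneg (ha0 _) (hb0 _)
  rw [← ENNReal.toReal_tsum_ofReal_mul hπ0 hz0, ← ENNReal.toReal_tsum_ofReal_mul hπ0 ha0,
    ← ENNReal.toReal_tsum_ofReal_mul hπ0 hb0, ← ENNReal.toReal_ofReal hc.le,
    ← ENNReal.toReal_mul, ← ENNReal.toReal_mul]
  exact ENNReal.toReal_mono (by finiteness [ENNReal.tsum_ofReal_mul_ofReal_ne_top hπ0 ha0 haΦ,
    ENNReal.tsum_ofReal_mul_ofReal_ne_top hπ0 hb0 hbΦ]) key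

/-- If the partial sums S of a binormalizing sequence π satisfy
S_{mn} ≤ c·S_m·S_n, then Φ_π is submultiplicative on tensor products: for nonincreasing
nonnegative sequences a, b (0-indexed) with finite Φ_π-norm and z the nonincreasing
rearrangement of the products (a_i·b_j), we have Φ_π(z) ≤ c·Φ_π(a)·Φ_π(b). -/
theorem stmt_8 (π : ℕ → ℝ) (hπpos : ∀ j, 1 ≤ j → 0 < π j)
    (hπanti : ∀ i j : ℕ, 1 ≤ i → i ≤ j → π j ≤ π i) (hπ1 : π 1 = 1)
    (hπlim : Filter.Tendsto π Filter.atTop (nhds 0)) (hπdiv : ¬ Summable π)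
    (S : ℕ → ℝ) (hS : ∀ m, S m = ∑ j ∈ Finset.Icc 1 m, π j)
    (c : ℝ) (hc : 0 < c) (hsub : ∀ m n : ℕ, S (m * n) ≤ c * S m * S n)
    (a b z : ℕ → ℝ)
    (ha : Antitone a) (ha0 : ∀ i, 0 ≤ a i) (haΦ : Summable (fun i => π (i + 1) * a i))
    (hb : Antitone b) (hb0 : ∀ j, 0 ≤ b j) (hbΦ : Summable (fun j => π (j + 1) * b j))
    (hz : Antitone z) (hz0 : ∀ k, 0 ≤ z k)
    (e : ℕ ≃ ℕ × ℕ) (he : ∀ k, z k = a (e k).1 * b (e k).2) :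
    (∑' k : ℕ, π (k + 1) * z k)
      ≤ c * (∑' i : ℕ, π (i + 1) * a i) * (∑' j : ℕ, π (j + 1) * b j) :=
  stmt_8_general π hπpos hπanti hπdiv S hS c hc hsub a b z ha ha0 haΦ hb hb0 hbΦ e he
end

section
/- Let (a_n) be positive reals with a_1 = 1 and suppose both: (i) there is c₁ > 0 with a_{mn} ≤ c₁ a_m a_n for all m,n, and (ii) there is c₂ > 0 with a_{mn} ≥ c₂ a_m a_n for all m,n. If additionally a is exactly multiplicative (c₁ = c₂ = 1, i.e., a_{mn} = a_m a_n) and nondecreasing with a_n → ∞, then there exists p ∈ (0,∞] such that a_n = n^{1/p} for all n, or a_n = 1 for all n. -/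
/-!
Taking logarithms, `L = log ∘ a` is completely additive and monotone on the positive integers.
For `b ≥ 2` and every `k`, the power `n ^ k` lies between `b ^ j` and `b ^ (j + 1)` with
`j = Nat.log b (n ^ k)`, so both `k * L n / L b` and `k * log n / log b` lie in `[j, j + 1]`.
Letting `k → ∞` forces `L n / L b = log n / log b`, i.e. `a n = n ^ s` with `s = L 2 / log 2 ≥ 0`;
the case `s = 0` is the constant sequence and otherwise `p = 1 / s`.
-/

def IsCompletelyAdditive (L : ℕ → ℝ) : Prop :=
  ∀ ⦃m n : ℕ⦄, 1 ≤ m → 1 ≤ n → L (m * n) = L m + L n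

namespace IsCompletelyAdditive

variable {L : ℕ → ℝ}

theorem map_one (hL : IsCompletelyAdditive L) : L 1 = 0 := by
  have h := hL le_rfl le_rfl
  rw [mul_one] at h
  linarith

theorem map_pow (hL : IsCompletelyAdditive L) {m : ℕ} (hm : 1 ≤ m) (k : ℕ) :
    L (m ^ k) = k * L m := by
  induction k with
  | zero => simp [hL.map_one]
  | succ k ih =>
    rw [pow_succ, hL (Nat.one_le_pow _ _ hm) hm, ih]
    push_cast
    ring

theorem natLog_mul_le_mul_le (hL : IsCompletelyAdditive L) (hmono : MonotoneOn L (Set.Ici 1))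
    {b n : ℕ} (hb : 2 ≤ b) (hn : 1 ≤ n) (k : ℕ) :
    Nat.log b (n ^ k) * L b ≤ k * L n ∧ k * L n ≤ (Nat.log b (n ^ k) + 1) * L b := by
  have hb1 : 1 ≤ b := by omega
  have hnk : 1 ≤ n ^ k := Nat.one_le_pow _ _ hn
  constructor
  · rw [← hL.map_pow hb1, ← hL.map_pow hn]
    exact hmono (Nat.one_le_pow _ _ hb1) hnk (Nat.pow_log_le_self b (by omega))
  · have h := hmono hnk (Nat.one_le_pow _ _ hb1) (Nat.lt_pow_succ_log_self hb (n ^ k)).le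
    rw [hL.map_pow hn, hL.map_pow hb1] at h
    push_cast at h
    exact h

end IsCompletelyAdditive

theorem isCompletelyAdditive_log_natCast : IsCompletelyAdditive fun n : ℕ => Real.log n := by
  intro m n hm hn
  push_cast
  exact Real.log_mul (by positivity) (by positivity)

theorem monotoneOn_log_natCast : MonotoneOn (fun n : ℕ => Real.log n) (Set.Ici 1) :=
  fun m hm _ _ hmn => Real.log_le_log (by exact_mod_cast hm) (by exact_mod_cast hmn)

theorem IsCompletelyAdditive.mul_log_eq {L : ℕ → ℝ} (hL : IsCompletelyAdditive L)
    (hmono : MonotoneOn L (Set.Ici 1)) {b n : ℕ} (hb : 2 ≤ b) (hn : 1 ≤ n) :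
    L n * Real.log b = Real.log n * L b := by
  set d := L n * Real.log b - Real.log n * L b
  have hLb : 0 ≤ L b :=
    hL.map_one ▸ hmono Set.self_mem_Ici (Set.mem_Ici.mpr (by omega)) (by omega)
  have hlogb : 0 ≤ Real.log b := Real.log_natCast_nonneg b
  have hbounded : ∀ k : ℕ, k * |d| ≤ L b * Real.log b := by
    intro k
    obtain ⟨hL₁, hL₂⟩ := hL.natLog_mul_le_mul_le hmono hb hn k
    obtain ⟨hlog₁, hlog₂⟩ :=
      isCompletelyAdditive_log_natCast.natLog_mul_le_mul_le monotoneOn_log_natCast hb hn k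
    rw [← Nat.abs_cast, ← abs_mul, abs_le]
    constructor <;> nlinarith [mul_le_mul_of_nonneg_right hL₁ hlogb,
      mul_le_mul_of_nonneg_right hL₂ hlogb, mul_le_mul_of_nonneg_right hlog₁ hLb,
      mul_le_mul_of_nonneg_right hlog₂ hLb]
  by_contra hne
  have hd : 0 < |d| := abs_pos.mpr (sub_ne_zero.mpr hne)
  obtain ⟨k, hk⟩ := exists_nat_gt (L b * Real.log b / |d|)
  rw [div_lt_iff₀ hd] at hk
  linarith [hbounded k]

theorem exists_rpow_eq_of_map_mul_of_monotoneOn {a : ℕ → ℝ} (hpos : ∀ n, 1 ≤ n → 0 < a n)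
    (hmul : ∀ m n : ℕ, 1 ≤ m → 1 ≤ n → a (m * n) = a m * a n)
    (hmono : MonotoneOn a (Set.Ici 1)) :
    ∃ s : ℝ, 0 ≤ s ∧ ∀ n : ℕ, 1 ≤ n → a n = (n : ℝ) ^ s := by
  set L := fun n => Real.log (a n)
  have hL : IsCompletelyAdditive L := fun m n hm hn => by
    simp only [L, hmul m n hm hn, Real.log_mul (hpos m hm).ne' (hpos n hn).ne']
  have hLmono : MonotoneOn L (Set.Ici 1) :=
    fun m hm _ hn hmn => Real.log_le_log (hpos m hm) (hmono hm hn hmn)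
  refine ⟨L 2 / Real.log 2, ?_, fun n hn => ?_⟩
  · exact div_nonneg (hL.map_one ▸ hLmono Set.self_mem_Ici (Set.mem_Ici.mpr one_le_two) one_le_two)
      (Real.log_nonneg one_le_two)
  · have hlog : Real.log (a n) = Real.log n * (L 2 / Real.log 2) := by
      have h := hL.mul_log_eq hLmono le_rfl hn
      push_cast at h
      field_simp
      linarith
    rw [Real.rpow_def_of_pos (by exact_mod_cast hn), ← hlog, Real.exp_log (hpos n hn)]

theorem stmt_11_general (a : ℕ → ℝ) (hpos : ∀ n, 1 ≤ n → 0 < a n)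
    (hmul : ∀ m n : ℕ, 1 ≤ m → 1 ≤ n → a (m * n) = a m * a n)
    (hmono : ∀ m n : ℕ, 1 ≤ m → m ≤ n → a m ≤ a n) :
    (∃ p : ℝ, 0 < p ∧ ∀ n : ℕ, 1 ≤ n → a n = (n : ℝ) ^ (1 / p))
      ∨ (∀ n : ℕ, 1 ≤ n → a n = 1) := by
  obtain ⟨s, hs, ha⟩ :=
    exists_rpow_eq_of_map_mul_of_monotoneOn hpos hmul fun m hm n _ hmn => hmono m n hm hmn
  rcases hs.eq_or_lt with rfl | hs
  · exact Or.inr fun n hn => by rw [ha n hn, Real.rpow_zero]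
  · exact Or.inl ⟨1 / s, one_div_pos.mpr hs, fun n hn => by rw [one_div_one_div, ha n hn]⟩

/-- A positive, exactly multiplicative (a_{mn} = a_m·a_n for all m,n),
nondecreasing sequence with a_1 = 1 tending to ∞ is a power function: a_n = n^{1/p}
for some p ∈ (0,∞), or a_n = 1 for all n. -/
theorem stmt_11 (a : ℕ → ℝ) (hpos : ∀ n, 1 ≤ n → 0 < a n) (h1 : a 1 = 1)
    (c₁ : ℝ) (hc₁ : 0 < c₁)
    (hsub : ∀ m n : ℕ, 1 ≤ m → 1 ≤ n → a (m * n) ≤ c₁ * a m * a n)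
    (c₂ : ℝ) (hc₂ : 0 < c₂)
    (hsuper : ∀ m n : ℕ, 1 ≤ m → 1 ≤ n → c₂ * a m * a n ≤ a (m * n))
    (hmul : ∀ m n : ℕ, 1 ≤ m → 1 ≤ n → a (m * n) = a m * a n)
    (hmono : ∀ m n : ℕ, 1 ≤ m → m ≤ n → a m ≤ a n)
    (hinf : Filter.Tendsto a Filter.atTop Filter.atTop) :
    (∃ p : ℝ, 0 < p ∧ ∀ n : ℕ, 1 ≤ n → a n = (n : ℝ) ^ (1 / p))
      ∨ (∀ n : ℕ, 1 ≤ n → a n = 1) :=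
  stmt_11_general a hpos hmul hmono
end

section
/- Let B be an m×k complex matrix with operator norm ‖B‖, let T₁,…,T_m be n×n matrices, define S_j = ∑_i B_{ij} T_i for j = 1,…,k, and let x be an n×n positive semidefinite matrix. Then for any unitarily invariant norm ‖·‖_Ψ on matrices, ‖∑_{j=1}^k S_j x S_j^*‖_Ψ ≤ ‖B‖² · ‖∑_{i=1}^m T_i x T_i^*‖_Ψ. -/
/-!
Write `x = y yᴴ` and put the matrices `Tᵢ y` side by side into one block row `D`, so that
`∑ᵢ Tᵢ x Tᵢᴴ = D Dᴴ`. The block row of the `Sⱼ y` is then `C = D M` with `M = B ⊗ 1`, and the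
two properties of `N` give
`N(C Cᴴ) = N(Mᴴ (Dᴴ D) M) ≤ ‖M‖² N(Dᴴ D) = ‖M‖² N(D Dᴴ)`.
Finally `‖B ⊗ 1‖ = ‖B‖`: `A ↦ A ⊗ 1` is an injective *-homomorphism of C*-algebras, hence
isometric, and the C*-identity reduces the rectangular `B` to the square `Bᴴ B`.
-/

open Matrix
open scoped ComplexOrder Matrix.Norms.L2Operator Kronecker

namespace Matrix

lemma kronecker_one_injective {α l m n : Type*} [MulZeroOneClass α] [DecidableEq n]
    [Nonempty n] : Function.Injective fun A : Matrix l m α => A ⊗ₖ (1 : Matrix n n α) := by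
  intro A A' h
  obtain ⟨r⟩ := ‹Nonempty n›
  ext i j
  simpa using congrFun (congrFun h (i, r)) (j, r)

section Kronecker

variable {l m n : Type*} [Fintype l] [Fintype m] [Fintype n] [DecidableEq m] [DecidableEq n]

variable (n) in
def kroneckerOneStarAlgHom : Matrix m m ℂ →⋆ₐ[ℂ] Matrix (m × n) (m × n) ℂ where
  toFun A := A ⊗ₖ (1 : Matrix n n ℂ)
  map_one' := one_kronecker_one
  map_mul' A A' := by simpa using mul_kronecker_mul A A' (1 : Matrix n n ℂ) 1
  map_zero' := zero_kronecker _
  map_add' A A' := add_kronecker A A' _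
  commutes' c := by simp [Algebra.algebraMap_eq_smul_one, smul_kronecker]
  map_star' A := by simp [star_eq_conjTranspose, conjTranspose_kronecker]

lemma l2_opNorm_kronecker_one [Nonempty n] (B : Matrix l m ℂ) :
    ‖B ⊗ₖ (1 : Matrix n n ℂ)‖ = ‖B‖ := by
  have hsq : ‖(Bᴴ * B) ⊗ₖ (1 : Matrix n n ℂ)‖ = ‖Bᴴ * B‖ :=
    NonUnitalStarAlgHom.norm_map (kroneckerOneStarAlgHom n) kronecker_one_injective _
  rw [← mul_self_inj (norm_nonneg _) (norm_nonneg _), ← l2_opNorm_conjTranspose_mul_self,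
    ← l2_opNorm_conjTranspose_mul_self, ← hsq, conjTranspose_kronecker, conjTranspose_one,
    ← mul_kronecker_mul, one_mul]

end Kronecker

section BlockRow

variable {α ι κ n p : Type*}

def blockRow (F : ι → Matrix n p α) : Matrix n (ι × p) α :=
  of fun r c => F c.1 r c.2

variable [Fintype ι] [Fintype p]

lemma blockRow_mul_conjTranspose [Semiring α] [StarRing α] (F : ι → Matrix n p α) :
    blockRow F * (blockRow F)ᴴ = ∑ i, F i * (F i)ᴴ := by
  ext r s
  simp [blockRow, mul_apply, sum_apply, Fintype.sum_prod_type]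

lemma blockRow_mul_kronecker_one [CommSemiring α] [DecidableEq p] (F : ι → Matrix n p α)
    (B : Matrix ι κ α) :
    blockRow F * (B ⊗ₖ (1 : Matrix p p α)) = blockRow fun j => ∑ i, B i j • F i := by
  ext r ⟨j, q⟩
  simp [blockRow, mul_apply, sum_apply, Fintype.sum_prod_type, one_apply, mul_comm]

end BlockRow

lemma PosSemidef.exists_eq_mul_conjTranspose {n : Type*} [Fintype n] [DecidableEq n]
    {x : Matrix n n ℂ} (hx : x.PosSemidef) : ∃ y : Matrix n n ℂ, x = y * yᴴ := by
  open scoped MatrixOrder in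
  obtain ⟨y, rfl⟩ := CStarAlgebra.nonneg_iff_eq_star_mul_self.mp hx.nonneg
  exact ⟨yᴴ, by rw [conjTranspose_conjTranspose]; rfl⟩

end Matrix

section SymmetricNorm

variable {N : ∀ {d : Type} [Fintype d] [DecidableEq d], Matrix d d ℂ → ℝ}

lemma symmetricNorm_zero
    (hN_adj : ∀ {d d' : Type} [Fintype d] [DecidableEq d] [Fintype d'] [DecidableEq d']
      (A : Matrix d d' ℂ), N (A * Aᴴ) = N (Aᴴ * A))
    (hN_mul : ∀ {d d' : Type} [Fintype d] [DecidableEq d] [Fintype d'] [DecidableEq d']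
      (A : Matrix d d' ℂ) (X : Matrix d' d' ℂ) (Bm : Matrix d' d ℂ),
      N (A * X * Bm) ≤ ‖A‖ * N X * ‖Bm‖)
    {d : Type} [Fintype d] [DecidableEq d] : N (0 : Matrix d d ℂ) = 0 := by
  -- On an empty index type every operator norm is `0`, so the scaling argument is run on
  -- `Unit` and transported to `d` through `hN_adj`.
  have hunit : N (0 : Matrix Unit Unit ℂ) = 0 := by
    have hle : N (0 : Matrix Unit Unit ℂ) ≤ 0 := by
      simpa using hN_mul (0 : Matrix Unit Unit ℂ) 0 0
    have hge : N (0 : Matrix Unit Unit ℂ) ≤ 2 * N (0 : Matrix Unit Unit ℂ) := by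
      simpa [norm_smul, CStarRing.norm_one] using
        hN_mul ((2 : ℂ) • 1 : Matrix Unit Unit ℂ) 0 1
    linarith
  simpa [hunit] using hN_adj (0 : Matrix d Unit ℂ)

theorem symmetricNorm_sum_mul_conjTranspose_le
    (hN_adj : ∀ {d d' : Type} [Fintype d] [DecidableEq d] [Fintype d'] [DecidableEq d']
      (A : Matrix d d' ℂ), N (A * Aᴴ) = N (Aᴴ * A))
    (hN_mul : ∀ {d d' : Type} [Fintype d] [DecidableEq d] [Fintype d'] [DecidableEq d']
      (A : Matrix d d' ℂ) (X : Matrix d' d' ℂ) (Bm : Matrix d' d ℂ),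
      N (A * X * Bm) ≤ ‖A‖ * N X * ‖Bm‖)
    {ι κ n p : Type} [Fintype ι] [DecidableEq ι] [Fintype κ] [DecidableEq κ] [Fintype n]
    [DecidableEq n] [Fintype p] [DecidableEq p] (B : Matrix ι κ ℂ) (F : ι → Matrix n p ℂ) :
    N (∑ j, (∑ i, B i j • F i) * (∑ i, B i j • F i)ᴴ) ≤ ‖B‖ ^ 2 * N (∑ i, F i * (F i)ᴴ) := by
  rcases isEmpty_or_nonempty p with _ | _
  · have hzero {ι' : Type} [Fintype ι'] (G : ι' → Matrix n p ℂ) : ∑ j, G j * (G j)ᴴ = 0 :=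
      Finset.sum_eq_zero fun j _ => by ext; simp [mul_apply]
    simp [hzero, symmetricNorm_zero hN_adj hN_mul]
  set D := blockRow F
  set M : Matrix (ι × p) (κ × p) ℂ := B ⊗ₖ 1
  calc N (∑ j, (∑ i, B i j • F i) * (∑ i, B i j • F i)ᴴ)
      = N ((D * M) * (D * M)ᴴ) := by
        rw [blockRow_mul_kronecker_one, blockRow_mul_conjTranspose]
    _ = N (Mᴴ * (Dᴴ * D) * M) := by
        rw [hN_adj, conjTranspose_mul, Matrix.mul_assoc, Matrix.mul_assoc, Matrix.mul_assoc]
    _ ≤ ‖Mᴴ‖ * N (Dᴴ * D) * ‖M‖ := hN_mul _ _ _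
    _ = ‖B‖ ^ 2 * N (∑ i, F i * (F i)ᴴ) := by
        rw [l2_opNorm_conjTranspose, l2_opNorm_kronecker_one, ← hN_adj,
          blockRow_mul_conjTranspose]
        ring

end SymmetricNorm

/-- homogeneity lemma: if S_j = ∑_i B_{ij} T_i, then for any symmetric
(unitarily invariant) norm N on matrices,
‖∑_j S_j x S_j^*‖ ≤ ‖B‖²·‖∑_i T_i x T_i^*‖, where ‖B‖ is the ℓ²-operator norm. -/
theorem stmt_13 (n m k : ℕ) (B : Matrix (Fin m) (Fin k) ℂ)
    (T : Fin m → Matrix (Fin n) (Fin n) ℂ)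
    (S : Fin k → Matrix (Fin n) (Fin n) ℂ)
    (hSdef : ∀ j, S j = ∑ i : Fin m, B i j • T i)
    (x : Matrix (Fin n) (Fin n) ℂ) (hx : x.PosSemidef)
    (N : ∀ {d : Type} [inst : Fintype d] [inst2 : DecidableEq d], Matrix d d ℂ → ℝ)
    (hN_adj : ∀ {d d' : Type} [inst : Fintype d] [inst2 : DecidableEq d]
      [inst3 : Fintype d'] [inst4 : DecidableEq d']
      (A : Matrix d d' ℂ), N (A * Aᴴ) = N (Aᴴ * A))
    (hN_mul : ∀ {d d' : Type} [inst : Fintype d] [inst2 : DecidableEq d]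
      [inst3 : Fintype d'] [inst4 : DecidableEq d']
      (A : Matrix d d' ℂ) (X : Matrix d' d' ℂ) (Bm : Matrix d' d ℂ),
      N (A * X * Bm) ≤ ‖A‖ * N X * ‖Bm‖) :
    N (∑ j : Fin k, S j * x * (S j)ᴴ) ≤ ‖B‖ ^ 2 * N (∑ i : Fin m, T i * x * (T i)ᴴ) := by
  obtain ⟨y, rfl⟩ := hx.exists_eq_mul_conjTranspose
  have hconj (R : Matrix (Fin n) (Fin n) ℂ) : R * (y * yᴴ) * Rᴴ = (R * y) * (R * y)ᴴ := by
    simp only [conjTranspose_mul, Matrix.mul_assoc]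
  have hSy (j : Fin k) : S j * y = ∑ i, B i j • (T i * y) := by
    simp only [hSdef, Matrix.sum_mul, Matrix.smul_mul]
  simp only [hconj, hSy]
  exact symmetricNorm_sum_mul_conjTranspose_le hN_adj hN_mul B fun i => T i * y
end

section
/- Let a, b be trace-class operators (or matrices) with polar decompositions a = u|a|, b = v|b|, and let T₁,…,T_k be matrices. Then |∑_i tr(a T_i b T_i^*)| ≤ tr(|a| ∑_i T_i v|b|v^* T_i^*)^{1/2} · tr(u|a|u^* ∑_i T_i |b| T_i^*)^{1/2}. -/
open Matrix
open scoped ComplexOrder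

/-!
With `Xᵢ = Tᵢ v` and `Yᵢ = u* Tᵢ`, cycling the trace turns the left side into
`∑ tr (|a| Xᵢ |b| Yᵢ*)` and the two traces on the right into the same expression at `(X, X)` and
`(Y, Y)`. Since `|a|` and `|b|` are positive, this is a positive semidefinite Hermitian form on
families of matrices, and the estimate is its Cauchy–Schwarz inequality.
-/

namespace Matrix

variable {𝕜 ι n m : Type*} [RCLike 𝕜] [Fintype ι] [Fintype n] [Fintype m]

open scoped MatrixOrder in
theorem PosSemidef.trace_mul_mul_mul_conjTranspose_nonneg {A : Matrix n n 𝕜} {B : Matrix m m 𝕜}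
    (hA : A.PosSemidef) (hB : B.PosSemidef) (X : Matrix n m 𝕜) :
    0 ≤ trace (A * X * B * Xᴴ) := by
  classical
  obtain ⟨C, rfl⟩ := CStarAlgebra.nonneg_iff_eq_star_mul_self.mp hA.nonneg
  have hcycle : trace (star C * C * X * B * Xᴴ) = trace ((C * X) * B * (C * X)ᴴ) := by
    simp only [star_eq_conjTranspose, conjTranspose_mul, Matrix.mul_assoc]
    rw [trace_mul_comm Cᴴ]
    simp only [Matrix.mul_assoc]
  exact hcycle ▸ (hB.mul_mul_conjTranspose_same (C * X)).trace_nonneg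

abbrev PosSemidef.sumTracePreInnerCore {A : Matrix n n 𝕜} {B : Matrix m m 𝕜}
    (hA : A.PosSemidef) (hB : B.PosSemidef) : PreInnerProductSpace.Core 𝕜 (ι → Matrix n m 𝕜) where
  inner X Y := ∑ i, trace (A * Y i * B * (X i)ᴴ)
  conj_inner_symm X Y := by
    show starRingEnd 𝕜 (∑ i, trace (A * X i * B * (Y i)ᴴ)) = ∑ i, trace (A * Y i * B * (X i)ᴴ)
    simp only [map_sum, starRingEnd_apply, ← trace_conjTranspose, conjTranspose_mul,
      conjTranspose_conjTranspose, hA.isHermitian.eq, hB.isHermitian.eq, Matrix.mul_assoc]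
    refine Finset.sum_congr rfl fun i _ => ?_
    rw [trace_mul_comm A]
    simp only [Matrix.mul_assoc]
  re_inner_nonneg X := by
    rw [map_sum]
    exact Finset.sum_nonneg fun i _ =>
      (RCLike.nonneg_iff.mp (hA.trace_mul_mul_mul_conjTranspose_nonneg hB (X i))).1
  add_left X Y Z := by
    simp [conjTranspose_add, Matrix.mul_add, trace_add, Finset.sum_add_distrib]
  smul_left X Y r := by
    simp [conjTranspose_smul, trace_smul, Finset.mul_sum]

theorem PosSemidef.norm_sum_trace_mul_le {A : Matrix n n 𝕜} {B : Matrix m m 𝕜}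
    (hA : A.PosSemidef) (hB : B.PosSemidef) (X Y : ι → Matrix n m 𝕜) :
    ‖∑ i, trace (A * X i * B * (Y i)ᴴ)‖
      ≤ √(RCLike.re (∑ i, trace (A * X i * B * (X i)ᴴ)))
        * √(RCLike.re (∑ i, trace (A * Y i * B * (Y i)ᴴ))) :=
  (InnerProductSpace.Core.norm_inner_le_norm (c := hA.sumTracePreInnerCore hB) Y X).trans_eq
    (mul_comm _ _)

end Matrix

theorem stmt_15_general (n k : ℕ) (T : Fin k → Matrix (Fin n) (Fin n) ℂ)
    (a b u v absa absb : Matrix (Fin n) (Fin n) ℂ)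
    (ha_abs : absa.PosSemidef) (hb_abs : absb.PosSemidef)
    (ha_polar : a = u * absa) (hb_polar : b = v * absb) :
    ‖∑ i : Fin k, Matrix.trace (a * T i * b * (T i)ᴴ)‖
      ≤ Real.sqrt (Matrix.trace (absa * ∑ i : Fin k, T i * (v * absb * vᴴ) * (T i)ᴴ)).re
        * Real.sqrt (Matrix.trace ((u * absa * uᴴ) * ∑ i : Fin k, T i * absb * (T i)ᴴ)).re := by
  subst ha_polar hb_polar
  have hlhs : ∀ i, trace (u * absa * T i * (v * absb) * (T i)ᴴ)
      = trace (absa * (T i * v) * absb * (uᴴ * T i)ᴴ) := fun i => by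
    simp only [conjTranspose_mul, conjTranspose_conjTranspose, Matrix.mul_assoc]
    rw [trace_mul_comm u]
    simp only [Matrix.mul_assoc]
  have hrhs_v : trace (absa * ∑ i, T i * (v * absb * vᴴ) * (T i)ᴴ)
      = ∑ i, trace (absa * (T i * v) * absb * (T i * v)ᴴ) := by
    simp only [Matrix.mul_sum, trace_sum, conjTranspose_mul, Matrix.mul_assoc]
  have hrhs_u : trace (u * absa * uᴴ * ∑ i, T i * absb * (T i)ᴴ)
      = ∑ i, trace (absa * (uᴴ * T i) * absb * (uᴴ * T i)ᴴ) := by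
    simp only [Matrix.mul_sum, trace_sum, conjTranspose_mul, conjTranspose_conjTranspose,
      Matrix.mul_assoc]
    refine Finset.sum_congr rfl fun i _ => ?_
    rw [trace_mul_comm u]
    simp only [Matrix.mul_assoc]
  simpa only [hlhs, hrhs_v, hrhs_u, RCLike.re_to_complex] using
    ha_abs.norm_sum_trace_mul_le hb_abs (fun i => T i * v) (fun i => uᴴ * T i)

/-- key Cauchy–Schwarz estimate in Lemma 3.1: for a = u|a|, b = v|b| polar
decompositions, |∑ tr(a T_i b T_i^*)| ≤ tr(|a| ∑ T_i v|b|v^* T_i^*)^{1/2} ·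
tr(u|a|u^* ∑ T_i |b| T_i^*)^{1/2}. -/
theorem stmt_15 (n k : ℕ) (T : Fin k → Matrix (Fin n) (Fin n) ℂ)
    (a b u v absa absb : Matrix (Fin n) (Fin n) ℂ)
    (ha_abs : absa.PosSemidef) (hb_abs : absb.PosSemidef)
    (ha_sq : absa * absa = aᴴ * a) (hb_sq : absb * absb = bᴴ * b)
    (hu : u * uᴴ * u = u) (hv : v * vᴴ * v = v)
    (ha_polar : a = u * absa) (hb_polar : b = v * absb) :
    ‖∑ i : Fin k, Matrix.trace (a * T i * b * (T i)ᴴ)‖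
      ≤ Real.sqrt (Matrix.trace (absa * ∑ i : Fin k, T i * (v * absb * vᴴ) * (T i)ᴴ)).re
        * Real.sqrt (Matrix.trace ((u * absa * uᴴ) * ∑ i : Fin k, T i * absb * (T i)ᴴ)).re :=
  stmt_15_general n k T a b u v absa absb ha_abs hb_abs ha_polar hb_polar
end

section
/- Let Φ be a symmetric norming function satisfying (∗): ‖x⊗y‖_Φ ≤ c₁‖x‖_Φ‖y‖_Φ for all x, y in the ideal, and let p = lim_{n→∞} (log n)/(log ‖P_n‖_Φ) (which exists by the logarithmic-order lemma). Then ‖x‖_{Φ_p} ≤ c₁ ‖x‖_Φ for all x ∈ 𝔖_Φ, where Φ_p is the Schatten p-norm. Dually, if Φ satisfies (∗∗): ‖x⊗y‖_Φ ≥ c₂‖x‖_Φ‖y‖_Φ, then c₂‖x‖_Φ ≤ ‖x‖_{Φ_p}. In particular, if Φ is a cross norm (both hold with c₁ = c₂ = 1), then Φ = Φ_p. -/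
/-- A finitely supported nonincreasing nonnegative sequence. -/
def IsMonoSeq (x : ℕ → ℝ) : Prop :=
  Antitone x ∧ (∀ i, 0 ≤ x i) ∧ ∃ N, ∀ k, N ≤ k → x k = 0

/-- `z` is a rearrangement of the doubly indexed product family `(x_i·y_j)`. -/
def IsTensorRearrangement (x y z : ℕ → ℝ) : Prop :=
  ∃ e : ℕ ≃ ℕ × ℕ, ∀ k, z k = x (e k).1 * y (e k).2

/-!
Tensor power trick. If `S = ∑ x_k^p`, the sorted `m`-fold tensor power `X_m` of `x` has
`∑ (X_m)_k^p = S^m`, while (∗) resp. (∗∗) bound `c Φ(X_m)` above resp. below by `(c Φ(x))^m`.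
On `X_m` the two quantities are compared through the fundamental function
`φ(n) = Φ(1,…,1,0,…)` alone, which by the definition of `p` grows like `n^(1/p ± ε)`:
the weak-type bound `z_k φ(k+1) ≤ Φ(z)` gives `∑ z_k^p ≤ C Φ(z)^p K^ε (1 + log K)` for `z`
supported on `K` terms, and dyadic blocking gives `Φ(z) ≤ C (R+1) 2^(Rε) (∑ z_k^p)^(1/p)` for `z`
supported on `2^R` terms. Both losses are subexponential in `m`, so they disappear after taking
`m`-th roots and letting `m → ∞`, and then `ε → 0`.
-/

open Filter Topology

lemma exists_perm_antitone_comp {w : ℕ → ℝ} {n : ℕ} (hw : ∀ k, 0 ≤ w k)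
    (hn : ∀ k, n ≤ k → w k = 0) : ∃ π : Equiv.Perm ℕ, Antitone (w ∘ π) := by
  let σ : Equiv.Perm (Fin n) := Tuple.sort fun i : Fin n => -w i
  have hσ : Monotone ((fun i : Fin n => -w i) ∘ σ) := Tuple.monotone_sort _
  let π : Equiv.Perm ℕ := σ.extendDomain Fin.equivSubtype
  have hπ_lt : ∀ k (h : k < n), π k = σ ⟨k, h⟩ := fun k h => by
    simpa [π, Fin.equivSubtype] using
      Equiv.Perm.extendDomain_apply_subtype σ Fin.equivSubtype (b := k) h
  have hπ_ge : ∀ k, n ≤ k → π k = k := fun k h =>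
    Equiv.Perm.extendDomain_apply_not_subtype σ _ (by simpa using h)
  refine ⟨π, fun a b hab => ?_⟩
  by_cases hb : b < n
  · have ha : a < n := hab.trans_lt hb
    simpa [hπ_lt a ha, hπ_lt b hb] using hσ (show (⟨a, ha⟩ : Fin n) ≤ ⟨b, hb⟩ from hab)
  · simp only [Function.comp_apply, hπ_ge b (not_lt.1 hb), hn b (not_lt.1 hb)]
    exact hw _

lemma IsMonoSeq.summable_rpow {x : ℕ → ℝ} (hx : IsMonoSeq x) {q : ℝ} (hq : 0 < q) :
    Summable fun k => x k ^ q := by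
  obtain ⟨N, hN⟩ := hx.2.2
  refine summable_of_ne_finset_zero (s := Finset.range N) fun k hk => ?_
  rw [hN k (by simpa using hk), Real.zero_rpow hq.ne']

namespace IsTensorRearrangement

variable {x y z : ℕ → ℝ}

lemma eq_zero_of_mul_le (h : IsTensorRearrangement x y z) (hz : Antitone z)
    (hz0 : ∀ k, 0 ≤ z k) {N M : ℕ} (hN : ∀ k, N ≤ k → x k = 0)
    (hM : ∀ k, M ≤ k → y k = 0) : ∀ k, N * M ≤ k → z k = 0 := by
  obtain ⟨e, he⟩ := h
  suffices hNM : z (N * M) = 0 from fun k hk => le_antisymm (hNM ▸ hz hk) (hz0 k)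
  by_contra hne
  have hmem : ∀ j ∈ Finset.range (N * M + 1), e j ∈ Finset.range N ×ˢ Finset.range M := by
    intro j hj
    have hzj : z j ≠ 0 := ((lt_of_le_of_ne (hz0 _) (Ne.symm hne)).trans_le
      (hz (Finset.mem_range_succ_iff.1 hj))).ne'
    rw [he] at hzj
    simp only [Finset.mem_product, Finset.mem_range]
    exact ⟨not_le.1 fun h => hzj (by rw [hN _ h, zero_mul]),
      not_le.1 fun h => hzj (by rw [hM _ h, mul_zero])⟩
  have := Finset.card_le_card_of_injOn _ hmem e.injective.injOn
  simp at this

lemma tsum_rpow (h : IsTensorRearrangement x y z) (hx : IsMonoSeq x) (hy : IsMonoSeq y)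
    {q : ℝ} (hq : 0 < q) :
    ∑' k, z k ^ q = (∑' k, x k ^ q) * ∑' k, y k ^ q := by
  obtain ⟨e, he⟩ := h
  have hprod : ∀ ij : ℕ × ℕ, (x ij.1 * y ij.2) ^ q = x ij.1 ^ q * y ij.2 ^ q := fun ij =>
    Real.mul_rpow (hx.2.1 _) (hy.2.1 _)
  rw [(hx.summable_rpow hq).tsum_mul_tsum (hy.summable_rpow hq)
    ((hx.summable_rpow hq).mul_of_nonneg (hy.summable_rpow hq)
      (fun _ => Real.rpow_nonneg (hx.2.1 _) _) fun _ => Real.rpow_nonneg (hy.2.1 _) _)]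
  simp_rw [he, hprod]
  exact e.tsum_eq fun ij => x ij.1 ^ q * y ij.2 ^ q

end IsTensorRearrangement

lemma IsMonoSeq.exists_isTensorRearrangement {x y : ℕ → ℝ} (hx : IsMonoSeq x)
    (hy : IsMonoSeq y) : ∃ z, IsMonoSeq z ∧ IsTensorRearrangement x y z := by
  obtain ⟨N, hN⟩ := hx.2.2
  obtain ⟨M, hM⟩ := hy.2.2
  let e : ℕ ≃ ℕ × ℕ := (Denumerable.eqv (ℕ × ℕ)).symm
  let w : ℕ → ℝ := fun k => x (e k).1 * y (e k).2
  have hw : IsTensorRearrangement x y w := ⟨e, fun _ => rfl⟩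
  have hw0 : ∀ k, 0 ≤ w k := fun k => mul_nonneg (hx.2.1 _) (hy.2.1 _)
  obtain ⟨L, hL⟩ : ∃ L, ∀ k, L ≤ k → w k = 0 := by
    refine ⟨((Finset.range N ×ˢ Finset.range M).image e.symm).sup id + 1, fun k hk => ?_⟩
    by_contra hwk
    refine absurd (Finset.le_sup (f := id) (Finset.mem_image.2 ⟨e k, ?_, e.symm_apply_apply k⟩))
      (by simpa using hk)
    simp only [Finset.mem_product, Finset.mem_range]
    exact ⟨not_le.1 fun h => hwk (by simp [w, hN _ h]),
      not_le.1 fun h => hwk (by simp [w, hM _ h])⟩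
  obtain ⟨π, hπ⟩ := exists_perm_antitone_comp hw0 hL
  have hz : IsTensorRearrangement x y (w ∘ π) := ⟨π.trans e, fun _ => rfl⟩
  exact ⟨w ∘ π, ⟨hπ, fun k => hw0 _, N * M, hz.eq_zero_of_mul_le hπ (fun k => hw0 _) hN hM⟩, hz⟩

lemma isMonoSeq_ite_lt {c : ℝ} (hc : 0 ≤ c) (n : ℕ) :
    IsMonoSeq fun k => if k < n then c else 0 := by
  refine ⟨fun a b hab => ?_, fun k => by dsimp only; split_ifs <;> simp [hc], n,
    fun k hk => by simp [hk]⟩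
  by_cases hb : b < n
  · simp [hb, hab.trans_lt hb]
  · dsimp only; split_ifs <;> simp [hc]

lemma isMonoSeq_zero : IsMonoSeq fun _ => 0 :=
  ⟨antitone_const, fun _ => le_rfl, 0, fun _ _ => rfl⟩

lemma IsMonoSeq.add {x y : ℕ → ℝ} (hx : IsMonoSeq x) (hy : IsMonoSeq y) : IsMonoSeq (x + y) := by
  obtain ⟨N, hN⟩ := hx.2.2
  obtain ⟨M, hM⟩ := hy.2.2
  exact ⟨hx.1.add hy.1, fun k => add_nonneg (hx.2.1 k) (hy.2.1 k), max N M, fun k hk => by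
    simp [hN k (le_of_max_le_left hk), hM k (le_of_max_le_right hk)]⟩

lemma isMonoSeq_sum {ι : Type*} (s : Finset ι) {g : ι → ℕ → ℝ}
    (hg : ∀ r ∈ s, IsMonoSeq (g r)) : IsMonoSeq fun k => ∑ r ∈ s, g r k := by
  classical
  induction s using Finset.induction_on with
  | empty => simpa using isMonoSeq_zero
  | insert a s ha ih =>
    simp only [Finset.sum_insert ha]
    exact (hg a (s.mem_insert_self a)).add (ih fun r hr => hg r (Finset.mem_insert_of_mem hr))

lemma IsMonoSeq.exists_tensorPowers {x : ℕ → ℝ} (hx : IsMonoSeq x) {N : ℕ}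
    (hN : ∀ k, N ≤ k → x k = 0) :
    ∃ X : ℕ → ℕ → ℝ, X 0 = x ∧ ∀ m, IsMonoSeq (X m) ∧ IsTensorRearrangement (X m) x (X (m + 1))
      ∧ (∀ k, N ^ (m + 1) ≤ k → X m k = 0)
      ∧ ∀ q : ℝ, 0 < q → ∑' k, X m k ^ q = (∑' k, x k ^ q) ^ (m + 1) := by
  choose T hT hxT using fun y (hy : IsMonoSeq y) => hy.exists_isTensorRearrangement hx
  let X : ℕ → {y // IsMonoSeq y} := fun m =>
    Nat.rec ⟨x, hx⟩ (fun _ y => ⟨T y.1 y.2, hT y.1 y.2⟩) m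
  refine ⟨fun m => (X m).1, rfl, fun m => ⟨(X m).2, hxT _ _, ?_, ?_⟩⟩
  · induction m with
    | zero => simpa [X] using hN
    | succ m ih =>
      rw [pow_succ]
      exact (hxT _ (X m).2).eq_zero_of_mul_le (hT _ _).1 (hT _ _).2.1 ih hN
  · intro q hq
    induction m with
    | zero => simp [X]
    | succ m ih => rw [pow_succ, ← ih, ← (hxT _ (X m).2).tsum_rpow (X m).2 hx hq]

lemma le_of_pow_succ_le_mul {a b C : ℝ} (hb : 0 ≤ b)
    (h : ∀ m : ℕ, a ^ (m + 1) ≤ b ^ (m + 1) * (C * (m + 1))) : a ≤ b := by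
  by_contra! hba
  have ha : 0 < a := hb.trans_lt hba
  have hb' : 0 < b := by
    refine hb.lt_of_ne fun hb0 => ?_
    have := h 0
    simp [← hb0] at this
    linarith
  have hr : 1 < a / b := (one_lt_div hb').2 hba
  have hC : 0 < C := by
    have := h 0
    simp only [zero_add, pow_one, Nat.cast_zero, mul_one] at this
    exact pos_of_mul_pos_right (ha.trans_le this) hb'.le
  obtain ⟨m, hm⟩ := (((tendsto_pow_const_div_const_pow_of_one_lt 1 hr).comp
    (tendsto_add_atTop_nat 1)).eventually (gt_mem_nhds (inv_pos.2 hC))).exists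
  have hm' := h m
  rw [← div_le_iff₀' (pow_pos hb' _), ← div_pow] at hm'
  simp only [Function.comp_apply, pow_one, Nat.cast_add, Nat.cast_one] at hm
  rw [div_lt_iff₀ (pow_pos (by linarith) _)] at hm
  have := mul_lt_mul_of_pos_left hm hC
  rw [← mul_assoc, mul_inv_cancel₀ hC.ne', one_mul] at this
  linarith

lemma le_of_forall_le_mul_rpow {a b t : ℝ} (ht : 0 < t)
    (h : ∀ δ : ℝ, 0 < δ → δ < 1 → a ≤ b * t ^ δ) : a ≤ b := by
  have hlim : Tendsto (fun δ : ℝ => b * t ^ δ) (𝓝[>] 0) (𝓝 b) := by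
    simpa using (((Real.continuous_const_rpow ht.ne').tendsto 0).mono_left
      nhdsWithin_le_nhds).const_mul b
  exact ge_of_tendsto hlim (eventually_of_mem (Ioo_mem_nhdsGT one_pos) fun δ hδ => h δ hδ.1 hδ.2)

lemma sum_range_rpow_sub_one_le {δ : ℝ} (hδ : 0 ≤ δ) (K : ℕ) :
    ∑ k ∈ Finset.range K, ((k : ℝ) + 1) ^ (δ - 1) ≤ (K : ℝ) ^ δ * (1 + Real.log K) := by
  have hharm : ∑ k ∈ Finset.range K, ((k : ℝ) + 1)⁻¹ ≤ 1 + Real.log K := by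
    simpa [harmonic] using harmonic_le_one_add_log K
  calc ∑ k ∈ Finset.range K, ((k : ℝ) + 1) ^ (δ - 1)
      ≤ ∑ k ∈ Finset.range K, (K : ℝ) ^ δ * ((k : ℝ) + 1)⁻¹ := by
        refine Finset.sum_le_sum fun k hk => ?_
        rw [Real.rpow_sub_one (by positivity), div_eq_mul_inv]
        gcongr
        exact_mod_cast Finset.mem_range.1 hk
    _ ≤ (K : ℝ) ^ δ * (1 + Real.log K) := by
        rw [← Finset.mul_sum]
        gcongr

lemma IsMonoSeq.mul_succ_rpow_le {z : ℕ → ℝ} (hz : IsMonoSeq z) {p : ℝ} (hp : 0 < p) (j : ℕ) :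
    z j * ((j : ℝ) + 1) ^ (1 / p) ≤ (∑' k, z k ^ p) ^ (1 / p) := by
  have hsum : z j ^ p * ((j : ℝ) + 1) ≤ ∑' k, z k ^ p :=
    calc z j ^ p * ((j : ℝ) + 1) = ∑ _k ∈ Finset.range (j + 1), z j ^ p := by simp [mul_comm]
      _ ≤ ∑ k ∈ Finset.range (j + 1), z k ^ p := Finset.sum_le_sum fun k hk =>
          Real.rpow_le_rpow (hz.2.1 j) (hz.1 (Finset.mem_range_succ_iff.1 hk)) hp.le
      _ ≤ ∑' k, z k ^ p :=
          (hz.summable_rpow hp).sum_le_tsum _ fun k _ => Real.rpow_nonneg (hz.2.1 k) p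
  calc z j * ((j : ℝ) + 1) ^ (1 / p) = (z j ^ p * ((j : ℝ) + 1)) ^ (1 / p) := by
        rw [Real.mul_rpow (Real.rpow_nonneg (hz.2.1 j) p) (by positivity), one_div,
          Real.rpow_rpow_inv (hz.2.1 j) hp.ne']
    _ ≤ (∑' k, z k ^ p) ^ (1 / p) :=
        Real.rpow_le_rpow (by have := hz.2.1 j; positivity) hsum (by positivity)

section Growth

variable {φ : ℕ → ℝ} {a s : ℝ}

lemma exists_rpow_le_mul_of_tendsto_log_div_log (hφ : ∀ n, 1 ≤ n → 1 ≤ φ n)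
    (hlim : Tendsto (fun n : ℕ => Real.log (φ n) / Real.log n) atTop (𝓝 a))
    (hs₀ : 0 ≤ s) (hs : s < a) : ∃ C, 0 < C ∧ ∀ n : ℕ, 1 ≤ n → (n : ℝ) ^ s ≤ C * φ n := by
  obtain ⟨n₀, hn₀⟩ := eventually_atTop.1
    ((hlim.eventually (lt_mem_nhds hs)).and (eventually_ge_atTop 2))
  refine ⟨(n₀ : ℝ) ^ s + 1, by positivity, fun n hn => ?_⟩
  have hφn : 1 ≤ φ n := hφ n hn
  by_cases hn₀n : n₀ ≤ n
  · obtain ⟨hlt, h2⟩ := hn₀ n hn₀n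
    have hlog : 0 < Real.log n := Real.log_pos (by exact_mod_cast h2)
    have hle : (n : ℝ) ^ s ≤ φ n := by
      rw [Real.rpow_def_of_pos (by positivity), ← Real.exp_log (by linarith : 0 < φ n)]
      exact Real.exp_le_exp.2 (by rw [lt_div_iff₀ hlog] at hlt; linarith)
    nlinarith [Real.rpow_nonneg (Nat.cast_nonneg n₀) s]
  · have hle : (n : ℝ) ^ s ≤ (n₀ : ℝ) ^ s :=
      Real.rpow_le_rpow (Nat.cast_nonneg n) (by exact_mod_cast (not_le.1 hn₀n).le) hs₀
    nlinarith [Real.rpow_nonneg (Nat.cast_nonneg n₀) s]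

lemma exists_le_mul_rpow_of_tendsto_log_div_log (hφ : Monotone φ)
    (hlim : Tendsto (fun n : ℕ => Real.log (φ n) / Real.log n) atTop (𝓝 a))
    (hs₀ : 0 ≤ s) (hs : a < s) : ∃ C, 0 < C ∧ ∀ n : ℕ, 1 ≤ n → φ n ≤ C * (n : ℝ) ^ s := by
  obtain ⟨n₀, hn₀⟩ := eventually_atTop.1
    ((hlim.eventually (gt_mem_nhds hs)).and (eventually_ge_atTop 2))
  refine ⟨|φ n₀| + 1, by positivity, fun n hn => ?_⟩
  have hns : 1 ≤ (n : ℝ) ^ s := Real.one_le_rpow (by exact_mod_cast hn) hs₀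
  by_cases hn₀n : n₀ ≤ n
  · obtain ⟨hlt, h2⟩ := hn₀ n hn₀n
    have hlog : 0 < Real.log n := Real.log_pos (by exact_mod_cast h2)
    have hle : φ n ≤ (n : ℝ) ^ s := by
      rcases le_or_gt (φ n) 0 with hφn | hφn
      · linarith
      rw [Real.rpow_def_of_pos (by positivity), ← Real.exp_log hφn]
      exact Real.exp_le_exp.2 (by rw [div_lt_iff₀ hlog] at hlt; linarith)
    nlinarith [abs_nonneg (φ n₀)]
  · have hle : φ n ≤ |φ n₀| := (hφ (not_le.1 hn₀n).le).trans (le_abs_self _)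
    nlinarith [abs_nonneg (φ n₀)]

end Growth

def PosHomogeneous (Φ : (ℕ → ℝ) → ℝ) : Prop :=
  ∀ c : ℝ, 0 ≤ c → ∀ x : ℕ → ℝ, Φ (fun k => c * x k) = c * Φ x

def MonotoneOnMonoSeq (Φ : (ℕ → ℝ) → ℝ) : Prop :=
  ∀ x y : ℕ → ℝ, IsMonoSeq x → IsMonoSeq y → (∀ k, x k ≤ y k) → Φ x ≤ Φ y

/-- `‖P_n‖_Φ` in the operator setting. -/
noncomputable def fundamentalFn (Φ : (ℕ → ℝ) → ℝ) (n : ℕ) : ℝ :=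
  Φ fun k => if k < n then 1 else 0

section NormingFunction

variable {Φ : (ℕ → ℝ) → ℝ}

namespace PosHomogeneous

lemma map_zero (hΦ : PosHomogeneous Φ) : Φ (fun _ => 0) = 0 := by
  simpa using hΦ 0 le_rfl fun _ => 0

lemma map_ite_lt (hΦ : PosHomogeneous Φ) {c : ℝ} (hc : 0 ≤ c) (n : ℕ) :
    Φ (fun k => if k < n then c else 0) = c * fundamentalFn Φ n := by
  rw [fundamentalFn, ← hΦ c hc]
  simp

lemma map_nonneg (hΦ : PosHomogeneous Φ) (h_mono : MonotoneOnMonoSeq Φ) {x : ℕ → ℝ}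
    (hx : IsMonoSeq x) : 0 ≤ Φ x :=
  hΦ.map_zero ▸ h_mono _ x isMonoSeq_zero hx hx.2.1

lemma mul_fundamentalFn_le (hΦ : PosHomogeneous Φ) (h_mono : MonotoneOnMonoSeq Φ)
    {z : ℕ → ℝ} (hz : IsMonoSeq z) (k : ℕ) : z k * fundamentalFn Φ (k + 1) ≤ Φ z := by
  rw [← hΦ.map_ite_lt (hz.2.1 k)]
  refine h_mono _ _ (isMonoSeq_ite_lt (hz.2.1 k) _) hz fun j => ?_
  split_ifs with hj
  · exact hz.1 (Nat.lt_succ_iff.1 hj)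
  · exact hz.2.1 j

lemma map_sum_le (hΦ : PosHomogeneous Φ) (h_add : ∀ x y, Φ (x + y) ≤ Φ x + Φ y) {ι : Type*}
    (s : Finset ι) (g : ι → ℕ → ℝ) : Φ (fun k => ∑ r ∈ s, g r k) ≤ ∑ r ∈ s, Φ (g r) := by
  classical
  induction s using Finset.induction_on with
  | empty => simp [hΦ.map_zero]
  | insert a s ha ih =>
    simp only [Finset.sum_insert ha]
    exact (h_add (g a) _).trans (by gcongr)

end PosHomogeneous

lemma MonotoneOnMonoSeq.fundamentalFn_mono (h_mono : MonotoneOnMonoSeq Φ) :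
    Monotone (fundamentalFn Φ) := fun n m hnm =>
  h_mono _ _ (isMonoSeq_ite_lt zero_le_one n) (isMonoSeq_ite_lt zero_le_one m) fun k => by
    by_cases hk : k < n
    · simp [hk, hk.trans_le hnm]
    · split_ifs <;> norm_num

lemma MonotoneOnMonoSeq.one_le_fundamentalFn (h_mono : MonotoneOnMonoSeq Φ)
    (h_norm : Φ (fun k => if k = 0 then 1 else 0) = 1) {n : ℕ} (hn : 1 ≤ n) :
    1 ≤ fundamentalFn Φ n := by
  have h1 : fundamentalFn Φ 1 = 1 := by simpa [fundamentalFn, Nat.lt_one_iff] using h_norm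
  exact h1 ▸ h_mono.fundamentalFn_mono hn

/-- `z ≤ ∑ r, z (2^r - 1) • 1_[0, 2^(r+1))`, because `z k ≤ z (2^r - 1)` for `r = log₂ (k + 1)`. -/
lemma PosHomogeneous.map_le_sum_dyadic (hΦ : PosHomogeneous Φ) (h_mono : MonotoneOnMonoSeq Φ)
    (h_add : ∀ x y, Φ (x + y) ≤ Φ x + Φ y) {z : ℕ → ℝ} (hz : IsMonoSeq z) {R : ℕ}
    (hR : ∀ k, 2 ^ R ≤ k → z k = 0) :
    Φ z ≤ ∑ r ∈ Finset.range (R + 1), z (2 ^ r - 1) * fundamentalFn Φ (2 ^ (r + 1)) := by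
  let g : ℕ → ℕ → ℝ := fun r k => if k < 2 ^ (r + 1) then z (2 ^ r - 1) else 0
  have hg : ∀ r, IsMonoSeq (g r) := fun r => isMonoSeq_ite_lt (hz.2.1 _) _
  have hzg : ∀ k, z k ≤ ∑ r ∈ Finset.range (R + 1), g r k := by
    intro k
    by_cases hk : k < 2 ^ R
    · have hlog_le : 2 ^ Nat.log 2 (k + 1) ≤ k + 1 := Nat.pow_log_le_self 2 k.succ_ne_zero
      have hlt_log : k + 1 < 2 ^ (Nat.log 2 (k + 1) + 1) := Nat.lt_pow_succ_log_self one_lt_two _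
      have hlog_R : Nat.log 2 (k + 1) < R + 1 :=
        Nat.log_lt_of_lt_pow k.succ_ne_zero (by rw [pow_succ]; omega)
      calc z k ≤ g (Nat.log 2 (k + 1)) k := by
            simp only [g, if_pos (show k < 2 ^ (Nat.log 2 (k + 1) + 1) by omega)]
            exact hz.1 (by omega)
        _ ≤ _ := Finset.single_le_sum (fun r _ => (hg r).2.1 k) (Finset.mem_range.2 hlog_R)
    · rw [hR k (not_lt.1 hk)]
      exact Finset.sum_nonneg fun r _ => (hg r).2.1 k
  calc Φ z ≤ Φ fun k => ∑ r ∈ Finset.range (R + 1), g r k :=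
        h_mono _ _ hz (isMonoSeq_sum _ fun r _ => hg r) hzg
    _ ≤ ∑ r ∈ Finset.range (R + 1), Φ (g r) := hΦ.map_sum_le h_add _ g
    _ = _ := Finset.sum_congr rfl fun r _ => hΦ.map_ite_lt (hz.2.1 _) _

lemma PosHomogeneous.tsum_rpow_le_of_rpow_le_fundamentalFn (hΦ : PosHomogeneous Φ)
    (h_mono : MonotoneOnMonoSeq Φ) {p δ C : ℝ} (hp : 0 < p) (hδ : 0 ≤ δ) (hC : 0 ≤ C)
    (hφ : ∀ n : ℕ, 1 ≤ n → (n : ℝ) ^ ((1 - δ) / p) ≤ C * fundamentalFn Φ n)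
    {z : ℕ → ℝ} (hz : IsMonoSeq z) {K : ℕ} (hK : ∀ k, K ≤ k → z k = 0) :
    ∑' k, z k ^ p ≤ (C * Φ z) ^ p * ((K : ℝ) ^ δ * (1 + Real.log K)) := by
  have hterm : ∀ k : ℕ, z k ^ p ≤ (C * Φ z) ^ p * ((k : ℝ) + 1) ^ (δ - 1) := by
    intro k
    have hk : (0 : ℝ) < k + 1 := by positivity
    have hzk := hz.2.1 k
    have hweak : z k * ((k : ℝ) + 1) ^ ((1 - δ) / p) ≤ C * Φ z :=
      calc z k * ((k : ℝ) + 1) ^ ((1 - δ) / p) ≤ z k * (C * fundamentalFn Φ (k + 1)) := by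
            gcongr
            exact_mod_cast hφ (k + 1) k.succ_pos
        _ ≤ C * Φ z := by
            rw [mul_left_comm]
            exact mul_le_mul_of_nonneg_left (hΦ.mul_fundamentalFn_le h_mono hz k) hC
    have hpow := Real.rpow_le_rpow (by positivity) hweak hp.le
    rw [Real.mul_rpow hzk (by positivity), ← Real.rpow_mul hk.le,
      div_mul_cancel₀ _ hp.ne'] at hpow
    calc z k ^ p = z k ^ p * ((k : ℝ) + 1) ^ (1 - δ) * ((k : ℝ) + 1) ^ (δ - 1) := by
          rw [mul_assoc, ← Real.rpow_add hk]
          simp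
      _ ≤ (C * Φ z) ^ p * ((k : ℝ) + 1) ^ (δ - 1) := by gcongr
  rw [tsum_eq_sum (s := Finset.range K) fun k hk => by
    rw [hK k (by simpa using hk), Real.zero_rpow hp.ne']]
  calc ∑ k ∈ Finset.range K, z k ^ p
      ≤ ∑ k ∈ Finset.range K, (C * Φ z) ^ p * ((k : ℝ) + 1) ^ (δ - 1) :=
        Finset.sum_le_sum fun k _ => hterm k
    _ ≤ (C * Φ z) ^ p * ((K : ℝ) ^ δ * (1 + Real.log K)) := by
        rw [← Finset.mul_sum]
        exact mul_le_mul_of_nonneg_left (sum_range_rpow_sub_one_le hδ K)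
          (Real.rpow_nonneg (mul_nonneg hC (hΦ.map_nonneg h_mono hz)) p)

lemma PosHomogeneous.map_le_of_fundamentalFn_le_rpow (hΦ : PosHomogeneous Φ)
    (h_mono : MonotoneOnMonoSeq Φ) (h_add : ∀ x y, Φ (x + y) ≤ Φ x + Φ y)
    {p δ C : ℝ} (hp : 0 < p) (hδ : 0 ≤ δ) (hC : 0 ≤ C)
    (hφ : ∀ n : ℕ, 1 ≤ n → fundamentalFn Φ n ≤ C * (n : ℝ) ^ (1 / p + δ))
    {z : ℕ → ℝ} (hz : IsMonoSeq z) {R : ℕ} (hR : ∀ k, 2 ^ R ≤ k → z k = 0) :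
    Φ z ≤ (R + 1) * (C * 2 ^ (1 / p + δ) * ((2 : ℝ) ^ R) ^ δ) * (∑' k, z k ^ p) ^ (1 / p) := by
  set T := (∑' k, z k ^ p) ^ (1 / p)
  set D := C * 2 ^ (1 / p + δ)
  have hterm : ∀ r ∈ Finset.range (R + 1),
      z (2 ^ r - 1) * fundamentalFn Φ (2 ^ (r + 1)) ≤ D * ((2 : ℝ) ^ R) ^ δ * T := by
    intro r hr
    have h2r : (0 : ℝ) < 2 ^ r := by positivity
    have hzr := hz.mul_succ_rpow_le hp (2 ^ r - 1)
    rw [Nat.cast_sub Nat.one_le_two_pow, Nat.cast_pow, Nat.cast_two, Nat.cast_one,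
      sub_add_cancel] at hzr
    have hφr : fundamentalFn Φ (2 ^ (r + 1)) ≤ D * ((2 : ℝ) ^ r) ^ (1 / p + δ) := by
      have := hφ (2 ^ (r + 1)) Nat.one_le_two_pow
      rwa [Nat.cast_pow, Nat.cast_two, pow_succ (2 : ℝ), Real.mul_rpow h2r.le zero_le_two,
        mul_comm (((2 : ℝ) ^ r) ^ (1 / p + δ)), ← mul_assoc] at this
    have hrR : ((2 : ℝ) ^ r) ^ δ ≤ ((2 : ℝ) ^ R) ^ δ :=
      Real.rpow_le_rpow h2r.le (pow_le_pow_right₀ one_le_two (Finset.mem_range_succ_iff.1 hr)) hδ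
    have hzr0 := hz.2.1 (2 ^ r - 1)
    calc z (2 ^ r - 1) * fundamentalFn Φ (2 ^ (r + 1))
        ≤ z (2 ^ r - 1) * (D * ((2 : ℝ) ^ r) ^ (1 / p + δ)) := by gcongr
      _ = D * ((2 : ℝ) ^ r) ^ δ * (z (2 ^ r - 1) * ((2 : ℝ) ^ r) ^ (1 / p)) := by
          rw [Real.rpow_add h2r]
          ring
      _ ≤ D * ((2 : ℝ) ^ R) ^ δ * T := by gcongr
  calc Φ z ≤ ∑ r ∈ Finset.range (R + 1), z (2 ^ r - 1) * fundamentalFn Φ (2 ^ (r + 1)) :=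
        hΦ.map_le_sum_dyadic h_mono h_add hz hR
    _ ≤ ∑ r ∈ Finset.range (R + 1), D * ((2 : ℝ) ^ R) ^ δ * T := Finset.sum_le_sum hterm
    _ = _ := by simp [mul_assoc]

lemma IsMonoSeq.exists_tensorPowers_map_le {x : ℕ → ℝ} (hx : IsMonoSeq x) {N : ℕ}
    (hN : ∀ k, N ≤ k → x k = 0) {c : ℝ} (hc : 0 ≤ c) (hΦx : 0 ≤ Φ x)
    (H : ∀ x y z : ℕ → ℝ, IsMonoSeq x → IsMonoSeq y → Antitone z → (∀ k, 0 ≤ z k) →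
        IsTensorRearrangement x y z → Φ z ≤ c * Φ x * Φ y) :
    ∃ X : ℕ → ℕ → ℝ, ∀ m, IsMonoSeq (X m) ∧ (∀ k, N ^ (m + 1) ≤ k → X m k = 0)
      ∧ (∀ q : ℝ, 0 < q → ∑' k, X m k ^ q = (∑' k, x k ^ q) ^ (m + 1))
      ∧ c * Φ (X m) ≤ (c * Φ x) ^ (m + 1) := by
  obtain ⟨X, rfl, hX⟩ := hx.exists_tensorPowers hN
  refine ⟨X, fun m => ⟨(hX m).1, (hX m).2.2.1, (hX m).2.2.2, ?_⟩⟩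
  induction m with
  | zero => simp
  | succ m ih =>
    obtain ⟨hXm, hXx, -⟩ := hX m
    calc c * Φ (X (m + 1)) ≤ c * (c * Φ (X m) * Φ (X 0)) := by
          gcongr
          exact H _ _ _ hXm hx (hX _).1.1 (hX _).1.2.1 hXx
      _ = (c * Φ (X m)) * (c * Φ (X 0)) := by ring
      _ ≤ (c * Φ (X 0)) ^ (m + 1) * (c * Φ (X 0)) := by gcongr
      _ = (c * Φ (X 0)) ^ (m + 1 + 1) := (pow_succ _ _).symm

lemma IsMonoSeq.exists_tensorPowers_le_map {x : ℕ → ℝ} (hx : IsMonoSeq x) {N : ℕ}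
    (hN : ∀ k, N ≤ k → x k = 0) {c : ℝ} (hc : 0 ≤ c) (hΦx : 0 ≤ Φ x)
    (H : ∀ x y z : ℕ → ℝ, IsMonoSeq x → IsMonoSeq y → Antitone z → (∀ k, 0 ≤ z k) →
        IsTensorRearrangement x y z → c * (Φ x * Φ y) ≤ Φ z) :
    ∃ X : ℕ → ℕ → ℝ, ∀ m, IsMonoSeq (X m) ∧ (∀ k, N ^ (m + 1) ≤ k → X m k = 0)
      ∧ (∀ q : ℝ, 0 < q → ∑' k, X m k ^ q = (∑' k, x k ^ q) ^ (m + 1))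
      ∧ (c * Φ x) ^ (m + 1) ≤ c * Φ (X m) := by
  obtain ⟨X, rfl, hX⟩ := hx.exists_tensorPowers hN
  refine ⟨X, fun m => ⟨(hX m).1, (hX m).2.2.1, (hX m).2.2.2, ?_⟩⟩
  induction m with
  | zero => simp
  | succ m ih =>
    obtain ⟨hXm, hXx, -⟩ := hX m
    calc (c * Φ (X 0)) ^ (m + 1 + 1) = (c * Φ (X 0)) ^ (m + 1) * (c * Φ (X 0)) := pow_succ _ _
      _ ≤ (c * Φ (X m)) * (c * Φ (X 0)) := by gcongr
      _ = c * (c * (Φ (X m) * Φ (X 0))) := by ring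
      _ ≤ c * Φ (X (m + 1)) := by
          gcongr
          exact H _ _ _ hXm hx (hX _).1.1 (hX _).1.2.1 hXx

lemma PosHomogeneous.rpow_tsum_le_of_tensor (hΦ : PosHomogeneous Φ)
    (h_mono : MonotoneOnMonoSeq Φ) (h_norm : Φ (fun k => if k = 0 then 1 else 0) = 1)
    {c p : ℝ} (hc : 0 < c) (hp : 0 < p)
    (hlim : Tendsto (fun n : ℕ => Real.log n / Real.log (fundamentalFn Φ n)) atTop (𝓝 p))
    (H : ∀ x y z : ℕ → ℝ, IsMonoSeq x → IsMonoSeq y → Antitone z → (∀ k, 0 ≤ z k) →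
        IsTensorRearrangement x y z → Φ z ≤ c * Φ x * Φ y)
    {x : ℕ → ℝ} (hx : IsMonoSeq x) : (∑' k, x k ^ p) ^ (1 / p) ≤ c * Φ x := by
  have hlim' : Tendsto (fun n : ℕ => Real.log (fundamentalFn Φ n) / Real.log n) atTop (𝓝 p⁻¹) :=
    by simpa only [inv_div] using hlim.inv₀ hp.ne'
  set A := c * Φ x
  have hA : 0 ≤ A := mul_nonneg hc.le (hΦ.map_nonneg h_mono hx)
  obtain ⟨N, hN⟩ := hx.2.2
  obtain ⟨X, hX⟩ := hx.exists_tensorPowers_map_le (N := N + 1) (fun k hk => hN k (by omega))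
    hc.le (hΦ.map_nonneg h_mono hx) H
  have hN0 : (0 : ℝ) < N + 1 := by positivity
  suffices hSA : ∑' k, x k ^ p ≤ A ^ p by
    simpa [Real.rpow_rpow_inv hA hp.ne'] using
      Real.rpow_le_rpow (tsum_nonneg fun k => Real.rpow_nonneg (hx.2.1 k) p) hSA
        (one_div_nonneg.2 hp.le)
  refine le_of_forall_le_mul_rpow hN0 fun δ hδ hδ1 => ?_
  obtain ⟨C, hC, hφC⟩ := exists_rpow_le_mul_of_tendsto_log_div_log
    (fun n hn => h_mono.one_le_fundamentalFn h_norm hn) hlim' (s := (1 - δ) / p)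
    (div_nonneg (by linarith) hp.le) (by rw [inv_eq_one_div]; gcongr; linarith)
  refine le_of_pow_succ_le_mul (by positivity) (C := (C / c) ^ p * (1 + Real.log (N + 1)))
    fun m => ?_
  have hlog : 0 ≤ Real.log ((N : ℝ) + 1) := Real.log_nonneg (by linarith)
  obtain ⟨hXm, hXsupp, hXsum, hXA⟩ := hX m
  calc (∑' k, x k ^ p) ^ (m + 1) = ∑' k, X m k ^ p := (hXsum p hp).symm
    _ ≤ (C * Φ (X m)) ^ p * ((((N + 1) ^ (m + 1) : ℕ) : ℝ) ^ δ
          * (1 + Real.log ((N + 1) ^ (m + 1) : ℕ))) :=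
        hΦ.tsum_rpow_le_of_rpow_le_fundamentalFn h_mono hp hδ.le hC.le hφC hXm hXsupp
    _ ≤ (C / c * A ^ (m + 1)) ^ p * ((((N : ℝ) + 1) ^ δ) ^ (m + 1)
          * ((1 + Real.log (N + 1)) * (m + 1))) := by
        have hXΦ : C * Φ (X m) ≤ C / c * A ^ (m + 1) := by
          rw [div_mul_eq_mul_div, le_div_iff₀ hc, mul_right_comm, mul_assoc]
          exact mul_le_mul_of_nonneg_left hXA hC.le
        push_cast
        rw [Real.log_pow, ← Real.rpow_pow_comm hN0.le]
        gcongr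
        · exact mul_nonneg hC.le (hΦ.map_nonneg h_mono hXm)
        · push_cast
          nlinarith
    _ = (A ^ p * ((N : ℝ) + 1) ^ δ) ^ (m + 1)
          * ((C / c) ^ p * (1 + Real.log (N + 1)) * (m + 1)) := by
        rw [Real.mul_rpow (by positivity) (by positivity), ← Real.rpow_pow_comm hA, mul_pow]
        ring

lemma PosHomogeneous.le_rpow_tsum_of_tensor (hΦ : PosHomogeneous Φ)
    (h_mono : MonotoneOnMonoSeq Φ) (h_add : ∀ x y, Φ (x + y) ≤ Φ x + Φ y)
    {c p : ℝ} (hc : 0 < c) (hp : 0 < p)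
    (hlim : Tendsto (fun n : ℕ => Real.log n / Real.log (fundamentalFn Φ n)) atTop (𝓝 p))
    (H : ∀ x y z : ℕ → ℝ, IsMonoSeq x → IsMonoSeq y → Antitone z → (∀ k, 0 ≤ z k) →
        IsTensorRearrangement x y z → c * (Φ x * Φ y) ≤ Φ z)
    {x : ℕ → ℝ} (hx : IsMonoSeq x) : c * Φ x ≤ (∑' k, x k ^ p) ^ (1 / p) := by
  have hlim' : Tendsto (fun n : ℕ => Real.log (fundamentalFn Φ n) / Real.log n) atTop (𝓝 p⁻¹) :=
    by simpa only [inv_div] using hlim.inv₀ hp.ne'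
  set A := c * Φ x
  set T := (∑' k, x k ^ p) ^ (1 / p)
  have hS : 0 ≤ ∑' k, x k ^ p := tsum_nonneg fun k => Real.rpow_nonneg (hx.2.1 k) p
  obtain ⟨N, hN⟩ := hx.2.2
  obtain ⟨X, hX⟩ := hx.exists_tensorPowers_le_map (N := 2 ^ N)
    (fun k hk => hN k (N.lt_two_pow_self.le.trans hk)) hc.le (hΦ.map_nonneg h_mono hx) H
  refine le_of_forall_le_mul_rpow (t := 2 ^ N) (by positivity) fun δ hδ _ => ?_
  obtain ⟨C, hC, hφC⟩ := exists_le_mul_rpow_of_tendsto_log_div_log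
    h_mono.fundamentalFn_mono hlim' (s := 1 / p + δ) (by positivity)
    (by rw [inv_eq_one_div]; linarith)
  refine le_of_pow_succ_le_mul (by positivity) (C := c * (C * 2 ^ (1 / p + δ)) * (N + 1))
    fun m => ?_
  obtain ⟨hXm, hXsupp, hXsum, hXA⟩ := hX m
  rw [← pow_mul] at hXsupp
  calc A ^ (m + 1) ≤ c * Φ (X m) := hXA
    _ ≤ c * (((N * (m + 1) : ℕ) + 1) * (C * 2 ^ (1 / p + δ) * ((2 : ℝ) ^ (N * (m + 1))) ^ δ)
          * (∑' k, X m k ^ p) ^ (1 / p)) := by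
        gcongr
        exact hΦ.map_le_of_fundamentalFn_le_rpow h_mono h_add hp hδ.le hC.le hφC hXm hXsupp
    _ ≤ c * (((N + 1) * (m + 1)) * (C * 2 ^ (1 / p + δ) * (((2 : ℝ) ^ N) ^ δ) ^ (m + 1))
          * T ^ (m + 1)) := by
        rw [hXsum p hp, pow_mul, ← Real.rpow_pow_comm (by positivity), ← Real.rpow_pow_comm hS]
        gcongr
        push_cast
        nlinarith
    _ = (T * ((2 : ℝ) ^ N) ^ δ) ^ (m + 1) * (c * (C * 2 ^ (1 / p + δ)) * (N + 1) * (m + 1)) := by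
        ring

end NormingFunction

/-- sequence-level version.  Let Φ be a symmetric norming function on
(finitely supported, nonincreasing, nonnegative) sequences and let
p = lim (log n)/(log Φ(1,…,1 (n ones))).  If Φ satisfies (∗) with constant c₁ then
‖x‖_{ℓ^p} ≤ c₁·Φ(x); if Φ satisfies (∗∗) with constant c₂ then c₂·Φ(x) ≤ ‖x‖_{ℓ^p};
and if Φ is a cross norm (both with c₁ = c₂ = 1) then Φ = Φ_p. -/
theorem stmt_19 (Φ : (ℕ → ℝ) → ℝ) (c₁ c₂ : ℝ) (hc₁ : 0 < c₁) (hc₂ : 0 < c₂)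
    (h_norm : Φ (fun k => if k = 0 then 1 else 0) = 1)
    (h_add : ∀ x y : ℕ → ℝ, Φ (x + y) ≤ Φ x + Φ y)
    (h_smul : ∀ (c : ℝ), 0 ≤ c → ∀ x : ℕ → ℝ, Φ (fun k => c * x k) = c * Φ x)
    (h_mono : ∀ x y : ℕ → ℝ, IsMonoSeq x → IsMonoSeq y → (∀ k, x k ≤ y k) → Φ x ≤ Φ y)
    (p : ℝ) (hp : 1 ≤ p)
    (hlim : Filter.Tendsto
      (fun n : ℕ => Real.log n / Real.log (Φ (fun k => if k < n then 1 else 0)))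
      Filter.atTop (nhds p)) :
    ((∀ x y z : ℕ → ℝ, IsMonoSeq x → IsMonoSeq y → Antitone z → (∀ k, 0 ≤ z k) →
        IsTensorRearrangement x y z → Φ z ≤ c₁ * Φ x * Φ y) →
      ∀ x : ℕ → ℝ, IsMonoSeq x → (∑' k : ℕ, x k ^ p) ^ (1 / p) ≤ c₁ * Φ x)
    ∧ ((∀ x y z : ℕ → ℝ, IsMonoSeq x → IsMonoSeq y → Antitone z → (∀ k, 0 ≤ z k) →
        IsTensorRearrangement x y z → c₂ * (Φ x * Φ y) ≤ Φ z) →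
      ∀ x : ℕ → ℝ, IsMonoSeq x → c₂ * Φ x ≤ (∑' k : ℕ, x k ^ p) ^ (1 / p))
    ∧ ((∀ x y z : ℕ → ℝ, IsMonoSeq x → IsMonoSeq y → Antitone z → (∀ k, 0 ≤ z k) →
        IsTensorRearrangement x y z → Φ z = Φ x * Φ y) →
      ∀ x : ℕ → ℝ, IsMonoSeq x → Φ x = (∑' k : ℕ, x k ^ p) ^ (1 / p)) := by
  have hp₀ : 0 < p := by linarith
  have upper := fun {c} (hc : 0 < c) H {x} (hx : IsMonoSeq x) =>
    PosHomogeneous.rpow_tsum_le_of_tensor h_smul h_mono h_norm hc hp₀ hlim H hx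
  have lower := fun {c} (hc : 0 < c) H {x} (hx : IsMonoSeq x) =>
    PosHomogeneous.le_rpow_tsum_of_tensor h_smul h_mono h_add hc hp₀ hlim H hx
  refine ⟨fun H _ hx => upper hc₁ H hx, fun H _ hx => lower hc₂ H hx, fun H x hx => ?_⟩
  have h₁ := upper one_pos (fun x y z hx hy hz hz₀ hxyz => by
    rw [H x y z hx hy hz hz₀ hxyz, one_mul]) hx
  have h₂ := lower one_pos (fun x y z hx hy hz hz₀ hxyz => by
    rw [H x y z hx hy hz hz₀ hxyz, one_mul]) hx
  rw [one_mul] at h₁ h₂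
  exact le_antisymm h₂ h₁
end
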